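/- arXiv:2309.15773 — 9 statements merged into one kernel-verified Lean document; each statement's English description precedes it below -/
import Mathlib

section
/- Let ρ₁, ρ₂ be real numbers with ρ₁ < 1, ρ₂ < 1 and ρ₁ + ρ₂ > 1. Then there exists a constant C = C(ρ₁, ρ₂) such that for all real c₁, c₂, ∫_{-∞}^{∞} dx / (⟨x - c₁⟩^{ρ₁} ⟨x - c₂⟩^{ρ₂}) ≤ C / ⟨c₁ - c₂⟩^{ρ₁ + ρ₂ - 1}. -/
/-!
Write `a = ⟨x - c₁⟩`, `b = ⟨x - c₂⟩` and `D = ⟨c₁ - c₂⟩`. Since `D ≤ a + b`, the larger of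
`a`, `b` is at least half of `max (min a b) D`, so the integrand is dominated by
`2 ^ ρ₂ k ρ₁ ρ₂ (x - c₁) + 2 ^ ρ₁ k ρ₂ ρ₁ (x - c₂)`, with `k ρ ρ' y = ⟨y⟩ ^ (-ρ) max ⟨y⟩ D ^ (-ρ')`.
Replacing `⟨y⟩` by `|y|` only increases `k`, and the integral of `k` then splits at `|y| = D`
into two power integrals, `∫_{|y| ≤ D} |y| ^ (-ρ) D ^ (-ρ')` and `∫_{|y| > D} |y| ^ (-ρ - ρ')`,
each of size `D ^ (1 - ρ - ρ')`.
-/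

open MeasureTheory Real Set

noncomputable def japaneseBracket (y : ℝ) : ℝ := √(1 + y ^ 2)

lemma japaneseBracket_pos (y : ℝ) : 0 < japaneseBracket y := sqrt_pos.2 (by positivity)

lemma abs_le_japaneseBracket (y : ℝ) : |y| ≤ japaneseBracket y := by
  rw [← sqrt_sq_eq_abs]
  exact sqrt_le_sqrt (by linarith)

lemma japaneseBracket_abs (y : ℝ) : japaneseBracket |y| = japaneseBracket y := by
  simp only [japaneseBracket, sq_abs]

lemma japaneseBracket_sub_le (u v : ℝ) :
    japaneseBracket (u - v) ≤ japaneseBracket u + japaneseBracket v := by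
  have hu := abs_le_japaneseBracket u
  have hv := abs_le_japaneseBracket v
  have hu2 : japaneseBracket u ^ 2 = 1 + u ^ 2 := sq_sqrt (by positivity)
  have hv2 : japaneseBracket v ^ 2 = 1 + v ^ 2 := sq_sqrt (by positivity)
  rw [japaneseBracket, sqrt_le_left (by linarith [abs_nonneg u, abs_nonneg v])]
  nlinarith [abs_mul_abs_self u, abs_mul_abs_self v, neg_abs_le (u * v), abs_mul u v,
    mul_le_mul hu hv (abs_nonneg v) (by linarith [abs_nonneg u])]

@[fun_prop]
lemma measurable_japaneseBracket : Measurable japaneseBracket := by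
  unfold japaneseBracket; fun_prop

lemma integrable_japaneseBracket_rpow_neg {σ : ℝ} (hσ : 1 < σ) :
    Integrable fun y => japaneseBracket y ^ (-σ) := by
  have h (y : ℝ) : japaneseBracket y ^ (-σ) = (1 + ‖y‖ ^ 2) ^ (-σ / 2) := by
    rw [rpow_div_two_eq_sqrt _ (by positivity), norm_eq_abs, sq_abs, japaneseBracket]
  simpa only [h] using integrable_rpow_neg_one_add_norm_sq (E := ℝ) (by simpa using hσ)

lemma rpow_neg_le_two_rpow_mul_max_rpow_neg {a b D ρ : ℝ} (ha : 0 < a) (hab : a ≤ b)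
    (hD : D ≤ a + b) (hρ : 0 ≤ ρ) : b ^ (-ρ) ≤ 2 ^ ρ * max a D ^ (-ρ) := by
  have hmax : max a D ≤ 2 * b := max_le (by linarith) (by linarith)
  calc b ^ (-ρ) = 2 ^ ρ * (2 * b) ^ (-ρ) := by
        rw [mul_rpow zero_le_two (ha.le.trans hab), ← mul_assoc, ← rpow_add two_pos,
          add_neg_cancel, rpow_zero, one_mul]
    _ ≤ 2 ^ ρ * max a D ^ (-ρ) := mul_le_mul_of_nonneg_left
        (rpow_le_rpow_of_nonpos (lt_max_of_lt_left ha) hmax (neg_nonpos.2 hρ)) (by positivity)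

lemma rpow_neg_mul_rpow_neg_le {a b D ρ ρ' : ℝ} (ha : 0 < a) (hb : 0 < b) (hD : D ≤ a + b)
    (hρ : 0 ≤ ρ) (hρ' : 0 ≤ ρ') :
    a ^ (-ρ) * b ^ (-ρ') ≤
      2 ^ ρ' * (a ^ (-ρ) * max a D ^ (-ρ')) + 2 ^ ρ * (b ^ (-ρ') * max b D ^ (-ρ)) := by
  rcases le_total a b with hab | hba
  · refine le_add_of_le_of_nonneg ?_ (by positivity)
    rw [mul_left_comm]
    exact mul_le_mul_of_nonneg_left (rpow_neg_le_two_rpow_mul_max_rpow_neg ha hab hD hρ')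
      (by positivity)
  · refine le_add_of_nonneg_of_le (by positivity) ?_
    rw [mul_comm, mul_left_comm]
    exact mul_le_mul_of_nonneg_left
      (rpow_neg_le_two_rpow_mul_max_rpow_neg hb hba (by linarith) hρ) (by positivity)

section Kernel

variable {ρ ρ' D : ℝ}

lemma integrableOn_rpow_mul_max_rpow (hρ : ρ < 1) (hσ : 1 < ρ + ρ') (hD : 0 < D) :
    IntegrableOn (fun t => t ^ (-ρ) * max t D ^ (-ρ')) (Ioi 0) := by
  rw [← Ioc_union_Ioi_eq_Ioi hD.le]
  refine IntegrableOn.union ?_ ?_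
  · have hnear : IntegrableOn (fun t => t ^ (-ρ)) (Ioc 0 D) :=
      (intervalIntegral.intervalIntegrable_rpow' (by linarith : -1 < -ρ)).1
    refine IntegrableOn.congr_fun (hnear.mul_const (D ^ (-ρ'))) (fun t ht => ?_)
      measurableSet_Ioc
    rw [max_eq_right ht.2]
  · refine (integrableOn_Ioi_rpow_of_lt (by linarith : -(ρ + ρ') < -1) hD).congr_fun
      (fun t ht => ?_) measurableSet_Ioi
    rw [max_eq_left (le_of_lt ht), ← rpow_add (hD.trans ht), neg_add]

lemma integral_rpow_mul_max_rpow (hρ : ρ < 1) (hσ : 1 < ρ + ρ') (hD : 0 < D) :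
    ∫ t in Ioi 0, t ^ (-ρ) * max t D ^ (-ρ') =
      (1 / (1 - ρ) + 1 / (ρ + ρ' - 1)) * D ^ (1 - (ρ + ρ')) := by
  have hint := integrableOn_rpow_mul_max_rpow hρ hσ hD
  rw [← Ioc_union_Ioi_eq_Ioi hD.le] at hint ⊢
  rw [setIntegral_union Ioc_disjoint_Ioi_same measurableSet_Ioi
    (hint.mono_set subset_union_left) (hint.mono_set subset_union_right)]
  have hnear : ∫ t in Ioc 0 D, t ^ (-ρ) * max t D ^ (-ρ') =
      D ^ (1 - ρ) / (1 - ρ) * D ^ (-ρ') := by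
    rw [setIntegral_congr_fun measurableSet_Ioc
      (g := fun t => t ^ (-ρ) * D ^ (-ρ')) (fun t ht => by rw [max_eq_right ht.2]),
      integral_mul_const, ← intervalIntegral.integral_of_le hD.le,
      integral_rpow (Or.inl (by linarith)), zero_rpow (by linarith), sub_zero, neg_add_eq_sub]
  have hfar : ∫ t in Ioi D, t ^ (-ρ) * max t D ^ (-ρ') =
      D ^ (1 - (ρ + ρ')) / (ρ + ρ' - 1) := by
    rw [setIntegral_congr_fun measurableSet_Ioi (g := fun t => t ^ (-(ρ + ρ')))
      (fun t ht => by rw [max_eq_left (le_of_lt ht), ← rpow_add (hD.trans ht), neg_add]),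
      integral_Ioi_rpow_of_lt (by linarith) hD, neg_add_eq_sub, neg_div, ← div_neg, neg_sub]
  have hsplit : D ^ (1 - ρ) * D ^ (-ρ') = D ^ (1 - (ρ + ρ')) := by
    rw [← rpow_add hD]; ring_nf
  rw [hnear, hfar, ← hsplit]
  field_simp

lemma integrable_japaneseBracket_rpow_mul_max_rpow (hρ' : 0 ≤ ρ') (hσ : 1 < ρ + ρ') :
    Integrable fun y => japaneseBracket y ^ (-ρ) * max (japaneseBracket y) D ^ (-ρ') := by
  refine (integrable_japaneseBracket_rpow_neg hσ).mono'
    (by fun_prop : Measurable _).aestronglyMeasurable (ae_of_all _ fun y => ?_)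
  have hy := japaneseBracket_pos y
  rw [norm_of_nonneg (by positivity), neg_add, rpow_add hy]
  exact mul_le_mul_of_nonneg_left (rpow_le_rpow_of_nonpos hy (le_max_left _ _) (by linarith))
    (by positivity)

lemma integral_japaneseBracket_rpow_mul_max_rpow_le (hρ₀ : 0 ≤ ρ) (hρ : ρ < 1) (hρ' : 0 ≤ ρ')
    (hσ : 1 < ρ + ρ') (hD : 0 < D) :
    ∫ y, japaneseBracket y ^ (-ρ) * max (japaneseBracket y) D ^ (-ρ') ≤
      2 * (1 / (1 - ρ) + 1 / (ρ + ρ' - 1)) * D ^ (1 - (ρ + ρ')) := by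
  have hle : ∀ t ∈ Ioi (0 : ℝ),
      japaneseBracket t ^ (-ρ) * max (japaneseBracket t) D ^ (-ρ') ≤
        t ^ (-ρ) * max t D ^ (-ρ') := fun t (ht : 0 < t) => by
    have hjt : t ≤ japaneseBracket t := (le_abs_self t).trans (abs_le_japaneseBracket t)
    exact mul_le_mul (rpow_le_rpow_of_nonpos ht hjt (by linarith))
      (rpow_le_rpow_of_nonpos (lt_max_of_lt_right hD) (max_le_max_right D hjt) (by linarith))
      (by positivity) (by positivity)
  calc ∫ y, japaneseBracket y ^ (-ρ) * max (japaneseBracket y) D ^ (-ρ')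
      = 2 * ∫ t in Ioi 0, japaneseBracket t ^ (-ρ) * max (japaneseBracket t) D ^ (-ρ') := by
        rw [← integral_comp_abs
          (f := fun t => japaneseBracket t ^ (-ρ) * max (japaneseBracket t) D ^ (-ρ'))]
        simp only [japaneseBracket_abs]
    _ ≤ 2 * ∫ t in Ioi 0, t ^ (-ρ) * max t D ^ (-ρ') :=
        mul_le_mul_of_nonneg_left (setIntegral_mono_on
          (integrable_japaneseBracket_rpow_mul_max_rpow hρ' hσ).integrableOn
          (integrableOn_rpow_mul_max_rpow hρ hσ hD) measurableSet_Ioi hle) zero_le_two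
    _ = 2 * (1 / (1 - ρ) + 1 / (ρ + ρ' - 1)) * D ^ (1 - (ρ + ρ')) := by
        rw [integral_rpow_mul_max_rpow hρ hσ hD, mul_assoc]

end Kernel

theorem integral_one_div_japaneseBracket_rpow_mul_rpow_le {ρ₁ ρ₂ : ℝ} (h₁₀ : 0 ≤ ρ₁)
    (h₁ : ρ₁ < 1) (h₂₀ : 0 ≤ ρ₂) (h₂ : ρ₂ < 1) (hσ : 1 < ρ₁ + ρ₂) (c₁ c₂ : ℝ) :
    ∫ x, 1 / (japaneseBracket (x - c₁) ^ ρ₁ * japaneseBracket (x - c₂) ^ ρ₂) ≤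
      (2 ^ ρ₂ * (2 * (1 / (1 - ρ₁) + 1 / (ρ₁ + ρ₂ - 1))) +
        2 ^ ρ₁ * (2 * (1 / (1 - ρ₂) + 1 / (ρ₁ + ρ₂ - 1)))) /
        japaneseBracket (c₁ - c₂) ^ (ρ₁ + ρ₂ - 1) := by
  set D := japaneseBracket (c₁ - c₂)
  have hD : 0 < D := japaneseBracket_pos _
  have hD_le (x : ℝ) : D ≤ japaneseBracket (x - c₁) + japaneseBracket (x - c₂) := by
    simpa only [sub_sub_sub_cancel_left, add_comm] using japaneseBracket_sub_le (x - c₂) (x - c₁)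
  have hK₁ := integral_japaneseBracket_rpow_mul_max_rpow_le h₁₀ h₁ h₂₀ hσ hD
  have hK₂ := integral_japaneseBracket_rpow_mul_max_rpow_le h₂₀ h₂ h₁₀ (by linarith) hD
  rw [add_comm ρ₂ ρ₁] at hK₂
  have hk₁ := integrable_japaneseBracket_rpow_mul_max_rpow (ρ := ρ₁) (D := D) h₂₀ hσ
  have hk₂ := integrable_japaneseBracket_rpow_mul_max_rpow (ρ := ρ₂) (D := D) h₁₀ (by linarith)
  set k₁ := fun y => japaneseBracket y ^ (-ρ₁) * max (japaneseBracket y) D ^ (-ρ₂)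
  set k₂ := fun y => japaneseBracket y ^ (-ρ₂) * max (japaneseBracket y) D ^ (-ρ₁)
  have hf₁ := (hk₁.comp_sub_right c₁).const_mul (2 ^ ρ₂)
  have hf₂ := (hk₂.comp_sub_right c₂).const_mul (2 ^ ρ₁)
  calc ∫ x, 1 / (japaneseBracket (x - c₁) ^ ρ₁ * japaneseBracket (x - c₂) ^ ρ₂)
      = ∫ x, japaneseBracket (x - c₁) ^ (-ρ₁) * japaneseBracket (x - c₂) ^ (-ρ₂) := by
        simp only [rpow_neg (japaneseBracket_pos _).le, one_div, mul_inv]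
    _ ≤ ∫ x, 2 ^ ρ₂ * k₁ (x - c₁) + 2 ^ ρ₁ * k₂ (x - c₂) :=
        integral_mono_of_nonneg (ae_of_all _ fun x => by
            have := japaneseBracket_pos (x - c₁); have := japaneseBracket_pos (x - c₂); positivity)
          (hf₁.add hf₂) (ae_of_all _ fun x => rpow_neg_mul_rpow_neg_le (japaneseBracket_pos _)
            (japaneseBracket_pos _) (hD_le x) h₁₀ h₂₀)
    _ = 2 ^ ρ₂ * (∫ y, k₁ y) + 2 ^ ρ₁ * ∫ y, k₂ y := by
        rw [integral_add hf₁ hf₂, integral_const_mul, integral_const_mul,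
          integral_sub_right_eq_self k₁, integral_sub_right_eq_self k₂]
    _ ≤ 2 ^ ρ₂ * (2 * (1 / (1 - ρ₁) + 1 / (ρ₁ + ρ₂ - 1)) * D ^ (1 - (ρ₁ + ρ₂)))
          + 2 ^ ρ₁ * (2 * (1 / (1 - ρ₂) + 1 / (ρ₁ + ρ₂ - 1)) * D ^ (1 - (ρ₁ + ρ₂))) := by
        gcongr
    _ = _ := by
        rw [← neg_sub (ρ₁ + ρ₂) 1, rpow_neg hD.le]
        ring

theorem stmt0 (ρ₁ ρ₂ : ℝ) (h₁ : ρ₁ < 1) (h₂ : ρ₂ < 1) (hsum : 1 < ρ₁ + ρ₂) :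
    ∃ C > 0, ∀ c₁ c₂ : ℝ,
      (∫ x : ℝ, 1 / ((Real.sqrt (1 + (x - c₁) ^ 2)) ^ ρ₁ *
        (Real.sqrt (1 + (x - c₂) ^ 2)) ^ ρ₂)) ≤
      C / (Real.sqrt (1 + (c₁ - c₂) ^ 2)) ^ (ρ₁ + ρ₂ - 1) := by
  have h₁₀ : 0 < ρ₁ := by linarith
  have h₂₀ : 0 < ρ₂ := by linarith
  have hK₁ : 0 < 1 / (1 - ρ₁) + 1 / (ρ₁ + ρ₂ - 1) :=
    add_pos (one_div_pos.2 (by linarith)) (one_div_pos.2 (by linarith))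
  have hK₂ : 0 < 1 / (1 - ρ₂) + 1 / (ρ₁ + ρ₂ - 1) :=
    add_pos (one_div_pos.2 (by linarith)) (one_div_pos.2 (by linarith))
  exact ⟨_, by positivity,
    integral_one_div_japaneseBracket_rpow_mul_rpow_le h₁₀.le h₁ h₂₀.le h₂ hsum⟩
end

section
/- Let ρ₁ ≥ ρ₂ > 1 be real numbers. Then there exists a constant C = C(ρ₁, ρ₂) such that for all real c₁, c₂, ∫_{-∞}^{∞} dx / (⟨x - c₁⟩^{ρ₁} ⟨x - c₂⟩^{ρ₂}) ≤ C / ⟨c₁ - c₂⟩^{ρ₂}. -/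
open MeasureTheory Real

private lemma br_one_le (t : ℝ) : 1 ≤ Real.sqrt (1 + t ^ 2) := by
  have h := Real.sqrt_le_sqrt (show (1:ℝ) ≤ 1 + t ^ 2 by nlinarith)
  simpa using h

private lemma br_sum (a b : ℝ) :
    Real.sqrt (1 + (a - b) ^ 2) ≤ Real.sqrt (1 + a ^ 2) + Real.sqrt (1 + b ^ 2) := by
  have ha : (0:ℝ) ≤ 1 + a ^ 2 := by positivity
  have hb : (0:ℝ) ≤ 1 + b ^ 2 := by positivity
  have hab : |a * b| ≤ Real.sqrt (1 + a ^ 2) * Real.sqrt (1 + b ^ 2) := by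
    rw [← Real.sqrt_mul ha, ← Real.sqrt_sq_eq_abs]
    exact Real.sqrt_le_sqrt (by nlinarith)
  have h2 : 1 + (a - b) ^ 2 ≤ (Real.sqrt (1 + a ^ 2) + Real.sqrt (1 + b ^ 2)) ^ 2 := by
    have e1 : Real.sqrt (1 + a ^ 2) ^ 2 = 1 + a ^ 2 := Real.sq_sqrt ha
    have e2 : Real.sqrt (1 + b ^ 2) ^ 2 = 1 + b ^ 2 := Real.sq_sqrt hb
    nlinarith [neg_abs_le (a * b), hab]
  calc Real.sqrt (1 + (a - b) ^ 2)
      ≤ Real.sqrt ((Real.sqrt (1 + a ^ 2) + Real.sqrt (1 + b ^ 2)) ^ 2) :=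
        Real.sqrt_le_sqrt h2
    _ = _ := Real.sqrt_sq (by positivity)

private lemma aux_int (ρ : ℝ) (hρ : 1 < ρ) :
    Integrable (fun x : ℝ => 1 / Real.sqrt (1 + x ^ 2) ^ ρ) := by
  have h := integrable_rpow_neg_one_add_norm_sq (E := ℝ) (μ := volume) (r := ρ)
    (by simpa using hρ)
  have he : ∀ x : ℝ, 1 / Real.sqrt (1 + x ^ 2) ^ ρ = ((1:ℝ) + ‖x‖ ^ 2) ^ (-ρ / 2) := by
    intro x
    rw [Real.norm_eq_abs, sq_abs, Real.sqrt_eq_rpow, ← Real.rpow_mul (by positivity),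
      neg_div, Real.rpow_neg (by positivity), one_div, show (1/2 : ℝ) * ρ = ρ / 2 by ring]
  simpa [he] using h

private lemma key (ρ₁ ρ₂ : ℝ) (h₁ : ρ₂ ≤ ρ₁) (h₂ : 0 ≤ ρ₂) (c₁ c₂ x : ℝ) :
    1 / (Real.sqrt (1 + (x - c₁) ^ 2) ^ ρ₁ * Real.sqrt (1 + (x - c₂) ^ 2) ^ ρ₂) ≤
    2 ^ ρ₂ / Real.sqrt (1 + (c₁ - c₂) ^ 2) ^ ρ₂ *
      (1 / Real.sqrt (1 + (x - c₁) ^ 2) ^ ρ₂ + 1 / Real.sqrt (1 + (x - c₂) ^ 2) ^ ρ₂) := by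
  have hsum : Real.sqrt (1 + (c₁ - c₂) ^ 2) ≤
      Real.sqrt (1 + (x - c₁) ^ 2) + Real.sqrt (1 + (x - c₂) ^ 2) := by
    have h := br_sum (x - c₁) (x - c₂)
    rw [show x - c₁ - (x - c₂) = -(c₁ - c₂) by ring, neg_sq] at h
    exact h
  set A := Real.sqrt (1 + (x - c₁) ^ 2) with hAdef
  set B := Real.sqrt (1 + (x - c₂) ^ 2) with hBdef
  set D := Real.sqrt (1 + (c₁ - c₂) ^ 2) with hDdef
  have hA : 1 ≤ A := br_one_le _
  have hB : 1 ≤ B := br_one_le _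
  have hD : 1 ≤ D := br_one_le _
  have hA0 : (0:ℝ) < A := by linarith
  have hB0 : (0:ℝ) < B := by linarith
  have hD0 : (0:ℝ) < D := by linarith
  have pA1 : (0:ℝ) < A ^ ρ₁ := Real.rpow_pos_of_pos hA0 _
  have pA2 : (0:ℝ) < A ^ ρ₂ := Real.rpow_pos_of_pos hA0 _
  have pB2 : (0:ℝ) < B ^ ρ₂ := Real.rpow_pos_of_pos hB0 _
  have pD2 : (0:ℝ) < D ^ ρ₂ := Real.rpow_pos_of_pos hD0 _
  have p22 : (0:ℝ) < (2:ℝ) ^ ρ₂ := Real.rpow_pos_of_pos (by norm_num) _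
  have hpow : A ^ ρ₂ ≤ A ^ ρ₁ := Real.rpow_le_rpow_of_exponent_le hA h₁
  have hDdiv : (D / 2) ^ ρ₂ = D ^ ρ₂ / 2 ^ ρ₂ := Real.div_rpow (le_of_lt hD0) (by norm_num : (0:ℝ) ≤ 2) ρ₂
  have hmax : D / 2 ≤ A ∨ D / 2 ≤ B := by
    by_contra hc
    push_neg at hc
    linarith [hc.1, hc.2]
  rcases hmax with hc | hc
  · have h5 : D ^ ρ₂ / 2 ^ ρ₂ ≤ A ^ ρ₂ := by
      rw [← hDdiv]; exact Real.rpow_le_rpow (by positivity) hc h₂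
    calc 1 / (A ^ ρ₁ * B ^ ρ₂) ≤ 1 / (D ^ ρ₂ / 2 ^ ρ₂ * B ^ ρ₂) := by
          apply one_div_le_one_div_of_le (by positivity)
          exact mul_le_mul (h5.trans hpow) le_rfl (le_of_lt pB2) (le_of_lt pA1)
      _ = 2 ^ ρ₂ / D ^ ρ₂ * (1 / B ^ ρ₂) := by
          field_simp
      _ ≤ 2 ^ ρ₂ / D ^ ρ₂ * (1 / A ^ ρ₂ + 1 / B ^ ρ₂) := by
          apply mul_le_mul_of_nonneg_left _ (by positivity)
          have : (0:ℝ) ≤ 1 / A ^ ρ₂ := by positivity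
          linarith
  · have h5 : D ^ ρ₂ / 2 ^ ρ₂ ≤ B ^ ρ₂ := by
      rw [← hDdiv]; exact Real.rpow_le_rpow (by positivity) hc h₂
    calc 1 / (A ^ ρ₁ * B ^ ρ₂) ≤ 1 / (A ^ ρ₂ * (D ^ ρ₂ / 2 ^ ρ₂)) := by
          apply one_div_le_one_div_of_le (by positivity)
          exact mul_le_mul hpow h5 (by positivity) (le_of_lt pA1)
      _ = 2 ^ ρ₂ / D ^ ρ₂ * (1 / A ^ ρ₂) := by
          field_simp
      _ ≤ 2 ^ ρ₂ / D ^ ρ₂ * (1 / A ^ ρ₂ + 1 / B ^ ρ₂) := by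
          apply mul_le_mul_of_nonneg_left _ (by positivity)
          have : (0:ℝ) ≤ 1 / B ^ ρ₂ := by positivity
          linarith

theorem stmt1 (ρ₁ ρ₂ : ℝ) (h₁ : ρ₁ ≥ ρ₂) (h₂ : ρ₂ > 1) :
    ∃ C > 0, ∀ c₁ c₂ : ℝ,
      (∫ x : ℝ, 1 / ((Real.sqrt (1 + (x - c₁) ^ 2)) ^ ρ₁ *
        (Real.sqrt (1 + (x - c₂) ^ 2)) ^ ρ₂)) ≤
      C / (Real.sqrt (1 + (c₁ - c₂) ^ 2)) ^ ρ₂ := by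
  have hρ₂0 : (0:ℝ) ≤ ρ₂ := by linarith
  have hint : Integrable (fun x : ℝ => 1 / Real.sqrt (1 + x ^ 2) ^ ρ₂) := aux_int ρ₂ h₂
  set I := ∫ x : ℝ, 1 / Real.sqrt (1 + x ^ 2) ^ ρ₂ with hI
  have hInn : 0 ≤ I := integral_nonneg fun x => by positivity
  refine ⟨2 ^ ρ₂ * (2 * I) + 1, by positivity, fun c₁ c₂ => ?_⟩
  have hD : 1 ≤ Real.sqrt (1 + (c₁ - c₂) ^ 2) := br_one_le _
  have hD0 : (0:ℝ) < Real.sqrt (1 + (c₁ - c₂) ^ 2) := by linarith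
  have hDp : (0:ℝ) < Real.sqrt (1 + (c₁ - c₂) ^ 2) ^ ρ₂ := Real.rpow_pos_of_pos hD0 _
  have hint1 : Integrable (fun x : ℝ => 1 / Real.sqrt (1 + (x - c₁) ^ 2) ^ ρ₂) := by
    simpa using hint.comp_sub_right c₁
  have hint2 : Integrable (fun x : ℝ => 1 / Real.sqrt (1 + (x - c₂) ^ 2) ^ ρ₂) := by
    simpa using hint.comp_sub_right c₂
  have hcont : Continuous (fun x : ℝ => 1 / (Real.sqrt (1 + (x - c₁) ^ 2) ^ ρ₁ *
      Real.sqrt (1 + (x - c₂) ^ 2) ^ ρ₂)) := by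
    apply Continuous.div continuous_const
    · apply Continuous.mul
      · exact (Real.continuous_sqrt.comp (by continuity)).rpow_const fun x => Or.inr (by linarith)
      · exact (Real.continuous_sqrt.comp (by continuity)).rpow_const fun x => Or.inr hρ₂0
    · intro x
      have h1 : (0:ℝ) < Real.sqrt (1 + (x - c₁) ^ 2) ^ ρ₁ :=
        Real.rpow_pos_of_pos (by linarith [br_one_le (x - c₁)]) _
      have h2 : (0:ℝ) < Real.sqrt (1 + (x - c₂) ^ 2) ^ ρ₂ :=
        Real.rpow_pos_of_pos (by linarith [br_one_le (x - c₂)]) _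
      positivity
  have hf_int : Integrable (fun x : ℝ => 1 / (Real.sqrt (1 + (x - c₁) ^ 2) ^ ρ₁ *
      Real.sqrt (1 + (x - c₂) ^ 2) ^ ρ₂)) := by
    apply hint2.mono' hcont.aestronglyMeasurable
    filter_upwards with x
    have hA : 1 ≤ Real.sqrt (1 + (x - c₁) ^ 2) := br_one_le _
    have hB : 1 ≤ Real.sqrt (1 + (x - c₂) ^ 2) := br_one_le _
    have hA1 : 1 ≤ Real.sqrt (1 + (x - c₁) ^ 2) ^ ρ₁ :=
      Real.one_le_rpow hA (by linarith)
    have pB2 : (0:ℝ) < Real.sqrt (1 + (x - c₂) ^ 2) ^ ρ₂ :=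
      Real.rpow_pos_of_pos (by linarith) _
    rw [Real.norm_eq_abs, abs_of_nonneg (by positivity)]
    rw [div_le_div_iff₀ (by positivity) pB2]
    nlinarith
  have hg_int : Integrable (fun x : ℝ =>
      2 ^ ρ₂ / Real.sqrt (1 + (c₁ - c₂) ^ 2) ^ ρ₂ *
      (1 / Real.sqrt (1 + (x - c₁) ^ 2) ^ ρ₂ + 1 / Real.sqrt (1 + (x - c₂) ^ 2) ^ ρ₂)) :=
    (hint1.add hint2).const_mul _
  have hle := integral_mono hf_int hg_int (fun x => key ρ₁ ρ₂ h₁ hρ₂0 c₁ c₂ x)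
  rw [integral_const_mul, integral_add hint1 hint2] at hle
  have e1 : (∫ x : ℝ, 1 / Real.sqrt (1 + (x - c₁) ^ 2) ^ ρ₂) = I := by
    simpa [hI] using integral_sub_right_eq_self (μ := volume) (fun y : ℝ => 1 / Real.sqrt (1 + y ^ 2) ^ ρ₂) c₁
  have e2 : (∫ x : ℝ, 1 / Real.sqrt (1 + (x - c₂) ^ 2) ^ ρ₂) = I := by
    simpa [hI] using integral_sub_right_eq_self (μ := volume) (fun y : ℝ => 1 / Real.sqrt (1 + y ^ 2) ^ ρ₂) c₂
  rw [e1, e2] at hle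
  refine hle.trans ?_
  rw [div_mul_eq_mul_div]
  have hend : 2 ^ ρ₂ * (I + I) ≤ 2 ^ ρ₂ * (2 * I) + 1 := by nlinarith [Real.rpow_pos_of_pos (show (0:ℝ) < 2 by norm_num) ρ₂]
  gcongr
end

section
/- Let s > -3/2, b ∈ ℝ, and τ ≥ 1. Suppose b < -s/2 + 5/4. Then ∫_{2√τ}^{∞} ⟨ξ⟩^{2s} ⟨τ + ξ²⟩^{2b} ξ^{-6} dξ ≤ C τ^{s + 2b - 5/2} for a constant C = C(s,b) independent of τ. In particular τ² times this integral is bounded by C τ^{s + 2b - 1/2}. -/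
open MeasureTheory Real

/-
For `ξ > 2√τ ≥ 2` both brackets are comparable to powers of `ξ`: `⟨ξ⟩ ≈ ξ` and
`⟨τ + ξ²⟩ ≈ ξ²`, with constants depending only on `s` and `b`. So the integrand is at most
`K ξ^p` with `p = 2s + 4b - 6 < -1`, whose integral over `(2√τ, ∞)` is a multiple of
`(2√τ)^(p+1)`, i.e. of `τ^(s + 2b - 5/2)`.
-/

theorem rpow_le_rpow_abs_mul_rpow {a M x y : ℝ} (hM : 1 ≤ M) (hy : 0 < y) (hyx : y ≤ x)
    (hxy : x ≤ M * y) : x ^ a ≤ M ^ |a| * y ^ a := by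
  rcases le_or_gt 0 a with ha | ha
  · rw [abs_of_nonneg ha, ← mul_rpow (by linarith) hy.le]
    exact rpow_le_rpow (hy.le.trans hyx) hxy ha
  · calc x ^ a ≤ y ^ a := rpow_le_rpow_of_nonpos hy hyx ha.le
      _ ≤ M ^ |a| * y ^ a :=
        le_mul_of_one_le_left (rpow_nonneg hy.le a) (one_le_rpow hM (abs_nonneg a))

theorem sqrt_one_add_sq_le {x : ℝ} (hx : 1 ≤ x) : √(1 + x ^ 2) ≤ √2 * x := by
  calc √(1 + x ^ 2) ≤ √(2 * x ^ 2) := sqrt_le_sqrt (by nlinarith)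
    _ = √2 * x := by rw [sqrt_mul zero_le_two, sqrt_sq (by linarith)]

theorem le_sqrt_one_add_sq (x : ℝ) : x ≤ √(1 + x ^ 2) :=
  le_sqrt_of_sq_le (by linarith)

theorem sqrt_one_add_sq_rpow_le {x : ℝ} (a : ℝ) (hx : 1 ≤ x) :
    √(1 + x ^ 2) ^ a ≤ √2 ^ |a| * x ^ a := by
  refine rpow_le_rpow_abs_mul_rpow ?_ (by linarith) (le_sqrt_one_add_sq x)
    (sqrt_one_add_sq_le hx)
  exact one_le_sqrt.2 one_le_two

theorem sqrt_one_add_sq_add_sq_rpow_le {τ ξ : ℝ} (a : ℝ) (hτ : 0 ≤ τ) (hξ : 1 ≤ ξ)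
    (hτξ : τ ≤ ξ ^ 2) :
    √(1 + (τ + ξ ^ 2) ^ 2) ^ a ≤ (2 * √2) ^ |a| * (ξ ^ 2) ^ a := by
  have h2 : 1 ≤ √2 := one_le_sqrt.2 one_le_two
  refine rpow_le_rpow_abs_mul_rpow (by linarith) (by positivity)
    ((le_add_of_nonneg_left hτ).trans (le_sqrt_one_add_sq _)) ?_
  calc √(1 + (τ + ξ ^ 2) ^ 2) ≤ √2 * (τ + ξ ^ 2) := sqrt_one_add_sq_le (by nlinarith)
    _ ≤ 2 * √2 * ξ ^ 2 := by nlinarith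

theorem setIntegral_Ioi_le_of_le_rpow {f : ℝ → ℝ} {K c p : ℝ} (hc : 0 < c) (hp : p < -1)
    (hf_nonneg : ∀ ξ ∈ Set.Ioi c, 0 ≤ f ξ) (hf_le : ∀ ξ ∈ Set.Ioi c, f ξ ≤ K * ξ ^ p) :
    ∫ ξ in Set.Ioi c, f ξ ≤ K * c ^ (p + 1) / -(p + 1) := by
  calc ∫ ξ in Set.Ioi c, f ξ ≤ ∫ ξ in Set.Ioi c, K * ξ ^ p :=
        integral_mono_of_nonneg (ae_restrict_of_forall_mem measurableSet_Ioi hf_nonneg)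
          ((integrableOn_Ioi_rpow_of_lt hp hc).const_mul K)
          (ae_restrict_of_forall_mem measurableSet_Ioi hf_le)
    _ = K * c ^ (p + 1) / -(p + 1) := by
        rw [integral_const_mul, integral_Ioi_rpow_of_lt hp hc, div_neg, neg_div, mul_neg,
          mul_div_assoc]

noncomputable def weight (s b τ ξ : ℝ) : ℝ :=
  √(1 + ξ ^ 2) ^ (2 * s) * √(1 + (τ + ξ ^ 2) ^ 2) ^ (2 * b) * ξ ^ (-6 : ℝ)

theorem weight_nonneg (s b τ : ℝ) {ξ : ℝ} (hξ : 0 < ξ) : 0 ≤ weight s b τ ξ := by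
  unfold weight
  positivity

theorem weight_le_rpow (s b : ℝ) {τ ξ : ℝ} (hτ : 0 ≤ τ) (hξ : 1 ≤ ξ) (hτξ : τ ≤ ξ ^ 2) :
    weight s b τ ξ ≤ √2 ^ |2 * s| * (2 * √2) ^ |2 * b| * ξ ^ (2 * s + 4 * b - 6) := by
  have hξ0 : 0 < ξ := by linarith
  have hsq : (ξ ^ 2) ^ (2 * b) = ξ ^ (4 * b) := by
    rw [← rpow_natCast_mul hξ0.le]; ring_nf
  calc weight s b τ ξ
      ≤ (√2 ^ |2 * s| * ξ ^ (2 * s)) * ((2 * √2) ^ |2 * b| * (ξ ^ 2) ^ (2 * b)) *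
          ξ ^ (-6 : ℝ) := by
        unfold weight
        gcongr
        · exact sqrt_one_add_sq_rpow_le _ hξ
        · exact sqrt_one_add_sq_add_sq_rpow_le _ hτ hξ hτξ
    _ = √2 ^ |2 * s| * (2 * √2) ^ |2 * b| * ξ ^ (2 * s + 4 * b - 6) := by
        rw [hsq, sub_eq_add_neg, rpow_add hξ0, rpow_add hξ0]; ring

theorem setIntegral_Ioi_two_sqrt_weight_le {s b τ : ℝ} (hsb : 2 * s + 4 * b - 5 < 0)
    (hτ : 1 ≤ τ) :
    ∫ ξ in Set.Ioi (2 * √τ), weight s b τ ξ ≤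
      √2 ^ |2 * s| * (2 * √2) ^ |2 * b| * 2 ^ (2 * s + 4 * b - 5) / -(2 * s + 4 * b - 5) *
        τ ^ (s + 2 * b - 5 / 2) := by
  have hsqrt : 1 ≤ √τ := one_le_sqrt.2 hτ
  have hle : ∀ ξ ∈ Set.Ioi (2 * √τ),
      weight s b τ ξ ≤ √2 ^ |2 * s| * (2 * √2) ^ |2 * b| * ξ ^ (2 * s + 4 * b - 6) := by
    intro ξ (hξ : 2 * √τ < ξ)
    have hτξ : τ ≤ ξ ^ 2 := by nlinarith [sq_sqrt (by linarith : 0 ≤ τ)]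
    exact weight_le_rpow s b (by linarith) (by linarith) hτξ
  calc _ ≤ √2 ^ |2 * s| * (2 * √2) ^ |2 * b| * (2 * √τ) ^ (2 * s + 4 * b - 6 + 1) /
          -(2 * s + 4 * b - 6 + 1) :=
        setIntegral_Ioi_le_of_le_rpow (by positivity) (by linarith)
          (fun ξ (hξ : 2 * √τ < ξ) => weight_nonneg s b τ (by linarith)) hle
    _ = _ := by
        rw [mul_rpow zero_le_two (sqrt_nonneg τ), sqrt_eq_rpow τ, ← rpow_mul (by linarith)]
        ring_nf

theorem stmt6_general (s b : ℝ) (hb : b < -s/2 + 5/4) :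
    ∃ C > 0, ∀ τ : ℝ, 1 ≤ τ →
      (∫ ξ in Set.Ioi (2 * Real.sqrt τ),
          (Real.sqrt (1 + ξ ^ 2)) ^ (2 * s) *
          (Real.sqrt (1 + (τ + ξ ^ 2) ^ 2)) ^ (2 * b) * ξ ^ (-6 : ℝ)) ≤
        C * τ ^ (s + 2 * b - 5/2) ∧
      τ ^ 2 * (∫ ξ in Set.Ioi (2 * Real.sqrt τ),
          (Real.sqrt (1 + ξ ^ 2)) ^ (2 * s) *
          (Real.sqrt (1 + (τ + ξ ^ 2) ^ 2)) ^ (2 * b) * ξ ^ (-6 : ℝ)) ≤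
        C * τ ^ (s + 2 * b - 1/2) := by
  have hsb : 2 * s + 4 * b - 5 < 0 := by linarith
  have hI := fun τ (hτ : 1 ≤ τ) => setIntegral_Ioi_two_sqrt_weight_le hsb hτ
  refine ⟨_, div_pos (by positivity) (neg_pos.2 hsb), fun τ hτ => ⟨hI τ hτ, ?_⟩⟩
  calc _ ≤ τ ^ 2 * (_ * τ ^ (s + 2 * b - 5 / 2)) :=
        mul_le_mul_of_nonneg_left (hI τ hτ) (sq_nonneg τ)
    _ = _ := by
        rw [show s + 2 * b - 1 / 2 = s + 2 * b - 5 / 2 + (2 : ℕ) by push_cast; ring,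
          rpow_add_natCast (by positivity)]
        ring

theorem stmt6 (s b : ℝ) (hs : s > -3/2) (hb : b < -s/2 + 5/4) :
    ∃ C > 0, ∀ τ : ℝ, 1 ≤ τ →
      (∫ ξ in Set.Ioi (2 * Real.sqrt τ),
          (Real.sqrt (1 + ξ ^ 2)) ^ (2 * s) *
          (Real.sqrt (1 + (τ + ξ ^ 2) ^ 2)) ^ (2 * b) * ξ ^ (-6 : ℝ)) ≤
        C * τ ^ (s + 2 * b - 5/2) ∧
      τ ^ 2 * (∫ ξ in Set.Ioi (2 * Real.sqrt τ),
          (Real.sqrt (1 + ξ ^ 2)) ^ (2 * s) *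
          (Real.sqrt (1 + (τ + ξ ^ 2) ^ 2)) ^ (2 * b) * ξ ^ (-6 : ℝ)) ≤
        C * τ ^ (s + 2 * b - 1/2) :=
  stmt6_general s b hb
end

section
/- Let s > -3/2, b ∈ ℝ, and τ ≥ 1. Then ∫_0^{2√τ} ⟨ξ⟩^{2s} ⟨τ + ξ²⟩^{2b} ξ² dξ ≤ C τ^{2b} (1 + τ^{s + 3/2}) for a constant C = C(s,b) independent of τ. -/
open MeasureTheory Real

theorem stmt7 (s b : ℝ) (hs : s > -3/2) :
    ∃ C > 0, ∀ τ : ℝ, 1 ≤ τ →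
      (∫ ξ in (0:ℝ)..(2 * Real.sqrt τ),
          (Real.sqrt (1 + ξ ^ 2)) ^ (2 * s) *
          (Real.sqrt (1 + (τ + ξ ^ 2) ^ 2)) ^ (2 * b) * ξ ^ 2) ≤
        C * τ ^ (2 * b) * (1 + τ ^ (s + 3/2)) := by
  have h3 : (0:ℝ) < 2*s+3 := by linarith
  set K : ℝ := (2:ℝ)^(2*s+3)/(2*s+3) + 8/3 * 5^s with hK
  have hK0 : (0:ℝ) < K := by positivity
  refine ⟨(26:ℝ)^|b| * K, by positivity, ?_⟩
  intro τ hτ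
  have hτ0 : (0:ℝ) < τ := by linarith
  have hsq : (0:ℝ) ≤ Real.sqrt τ := Real.sqrt_nonneg τ
  have hsqsq : Real.sqrt τ ^ 2 = τ := Real.sq_sqrt hτ0.le
  have hab : (0:ℝ) ≤ 2 * Real.sqrt τ := by positivity
  set c : ℝ := (26:ℝ)^|b| * τ^(2*b) with hc
  have hc0 : 0 < c := by positivity
  set L : ℝ := 2 * Real.sqrt τ with hL
  -- pointwise bound
  have hpt : ∀ ξ ∈ Set.Icc (0:ℝ) L,
      (Real.sqrt (1 + ξ^2))^(2*s) * (Real.sqrt (1 + (τ+ξ^2)^2))^(2*b) * ξ^2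
        ≤ c * (ξ^(2*s+2) + (5*τ)^s * ξ^2) := by
    rintro ξ ⟨hξ0, hξL⟩
    have hξ2 : ξ^2 ≤ 4*τ := by nlinarith
    -- bound B
    have hy0 : (0:ℝ) < 1 + (τ+ξ^2)^2 := by positivity
    have hy1 : τ ≤ Real.sqrt (1 + (τ+ξ^2)^2) := by
      have h := Real.sqrt_le_sqrt (show τ^2 ≤ 1 + (τ+ξ^2)^2 by nlinarith)
      rwa [Real.sqrt_sq hτ0.le] at h
    have hy2 : Real.sqrt (1 + (τ+ξ^2)^2) ≤ Real.sqrt 26 * τ := by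
      rw [show Real.sqrt 26 * τ = Real.sqrt (26 * τ^2) by
        rw [Real.sqrt_mul (by norm_num), Real.sqrt_sq hτ0.le]]
      apply Real.sqrt_le_sqrt; nlinarith
    have hB : (Real.sqrt (1 + (τ+ξ^2)^2))^(2*b) ≤ c := by
      rcases le_or_gt 0 b with hb | hb
      · calc (Real.sqrt (1 + (τ+ξ^2)^2))^(2*b)
            ≤ (Real.sqrt 26 * τ)^(2*b) :=
              Real.rpow_le_rpow (Real.sqrt_nonneg _) hy2 (by linarith)
          _ = (Real.sqrt 26)^(2*b) * τ^(2*b) :=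
              Real.mul_rpow (Real.sqrt_nonneg _) hτ0.le
          _ = (26:ℝ)^b * τ^(2*b) := by
              rw [Real.sqrt_eq_rpow, ← Real.rpow_mul (by norm_num : (0:ℝ) ≤ 26),
                show (1:ℝ)/2*(2*b) = b by ring]
          _ ≤ c := by
              rw [hc]
              apply mul_le_mul_of_nonneg_right _ (Real.rpow_nonneg hτ0.le _)
              exact Real.rpow_le_rpow_of_exponent_le (by norm_num) (le_abs_self b)
      · calc (Real.sqrt (1 + (τ+ξ^2)^2))^(2*b)
            ≤ τ^(2*b) :=
              Real.rpow_le_rpow_of_nonpos hτ0 hy1 (by linarith)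
          _ ≤ c := by
              rw [hc]
              nlinarith [Real.one_le_rpow (by norm_num : (1:ℝ) ≤ 26) (abs_nonneg b),
                Real.rpow_pos_of_pos hτ0 (2*b)]
    -- bound A * ξ^2
    have hA0 : (0:ℝ) ≤ (Real.sqrt (1 + ξ^2))^(2*s) := Real.rpow_nonneg (Real.sqrt_nonneg _) _
    have hAx : (Real.sqrt (1 + ξ^2))^(2*s) * ξ^2 ≤ ξ^(2*s+2) + (5*τ)^s * ξ^2 := by
      have h1 : (0:ℝ) < 1 + ξ^2 := by positivity
      rcases le_or_gt 0 s with hspos | hsneg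
      · have : (Real.sqrt (1 + ξ^2))^(2*s) ≤ (5*τ)^s := by
          calc (Real.sqrt (1 + ξ^2))^(2*s)
              ≤ (Real.sqrt (5*τ))^(2*s) := by
                apply Real.rpow_le_rpow (Real.sqrt_nonneg _) _ (by linarith)
                apply Real.sqrt_le_sqrt; nlinarith
            _ = (5*τ)^s := by
                rw [Real.sqrt_eq_rpow, ← Real.rpow_mul (by positivity),
                  show (1:ℝ)/2*(2*s) = s by ring]
        have hx2 : (0:ℝ) ≤ ξ^2 := sq_nonneg ξ
        have h4 := mul_le_mul_of_nonneg_right this hx2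
        have h5 : (0:ℝ) ≤ ξ^(2*s+2) := Real.rpow_nonneg hξ0 _
        linarith
      · rcases eq_or_lt_of_le hξ0 with h0 | h0
        · simp [← h0]
          positivity
        · have hA : (Real.sqrt (1 + ξ^2))^(2*s) ≤ ξ^(2*s) := by
            apply Real.rpow_le_rpow_of_nonpos h0 _ (by linarith)
            have h := Real.sqrt_le_sqrt (show ξ^2 ≤ 1 + ξ^2 by linarith)
            rwa [Real.sqrt_sq hξ0] at h
          have : ξ^(2*s) * ξ^2 = ξ^(2*s+2) := by
            rw [← Real.rpow_natCast ξ 2, ← Real.rpow_add h0]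
            norm_num
          have h4 := mul_le_mul_of_nonneg_right hA (sq_nonneg ξ)
          rw [this] at h4
          have h5 : (0:ℝ) ≤ (5*τ)^s * ξ^2 := by positivity
          linarith
    calc (Real.sqrt (1 + ξ^2))^(2*s) * (Real.sqrt (1 + (τ+ξ^2)^2))^(2*b) * ξ^2
        ≤ (Real.sqrt (1 + ξ^2))^(2*s) * c * ξ^2 := by
          apply mul_le_mul_of_nonneg_right _ (sq_nonneg ξ)
          exact mul_le_mul_of_nonneg_left hB hA0
      _ = c * ((Real.sqrt (1 + ξ^2))^(2*s) * ξ^2) := by ring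
      _ ≤ c * (ξ^(2*s+2) + (5*τ)^s * ξ^2) := mul_le_mul_of_nonneg_left hAx hc0.le
  -- integrability
  have hcontf : Continuous (fun ξ : ℝ => (Real.sqrt (1 + ξ^2))^(2*s) *
      (Real.sqrt (1 + (τ+ξ^2)^2))^(2*b) * ξ^2) := by
    apply Continuous.mul _ (continuous_pow 2)
    apply Continuous.mul
    · apply Continuous.rpow_const
      · exact Real.continuous_sqrt.comp (continuous_const.add (continuous_pow 2))
      · intro x
        exact Or.inl (Real.sqrt_pos.mpr (by positivity)).ne'
    · apply Continuous.rpow_const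
      · exact Real.continuous_sqrt.comp
          (continuous_const.add ((continuous_const.add (continuous_pow 2)).pow 2))
      · intro x
        exact Or.inl (Real.sqrt_pos.mpr (by positivity)).ne'
  have hint_f : IntervalIntegrable (fun ξ : ℝ => (Real.sqrt (1 + ξ^2))^(2*s) *
      (Real.sqrt (1 + (τ+ξ^2)^2))^(2*b) * ξ^2) volume 0 L :=
    hcontf.intervalIntegrable _ _
  have hint_rpow : IntervalIntegrable (fun ξ : ℝ => ξ^(2*s+2)) volume 0 L :=
    intervalIntegral.intervalIntegrable_rpow' (by linarith)
  have hint_g : IntervalIntegrable (fun ξ : ℝ => c * (ξ^(2*s+2) + (5*τ)^s * ξ^2))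
      volume 0 L := by
    apply IntervalIntegrable.const_mul
    exact hint_rpow.add (((continuous_pow 2).intervalIntegrable _ _).const_mul _)
  have hmono := intervalIntegral.integral_mono_on hab hint_f hint_g hpt
  refine le_trans hmono ?_
  -- compute the integral of g
  have hL0 : (0:ℝ) < L ∨ True := Or.inr trivial
  have hrpowL : L^(2*s+3) = 2^(2*s+3) * τ^(s+3/2) := by
    rw [hL, Real.mul_rpow (by norm_num) hsq, Real.sqrt_eq_rpow,
      ← Real.rpow_mul hτ0.le]
    ring_nf
  have hL3 : L^(3:ℕ) = 8 * τ^((3:ℝ)/2) := by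
    rw [hL, mul_pow, ← Real.rpow_natCast (Real.sqrt τ) 3, Real.sqrt_eq_rpow,
      ← Real.rpow_mul hτ0.le]
    norm_num
  have h5τ : (5*τ)^s * τ^((3:ℝ)/2) = 5^s * τ^(s+3/2) := by
    rw [Real.mul_rpow (by norm_num) hτ0.le, mul_assoc, ← Real.rpow_add hτ0]
  have hI1 : (∫ ξ in (0:ℝ)..L, ξ^(2*s+2)) = 2^(2*s+3)/(2*s+3) * τ^(s+3/2) := by
    rw [integral_rpow (Or.inl (by linarith)), Real.zero_rpow (by linarith),
      show 2*s+2+1 = 2*s+3 by ring, hrpowL]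
    ring
  have hI2 : (∫ ξ in (0:ℝ)..L, ξ^(2:ℕ)) = 8/3 * τ^((3:ℝ)/2) := by
    rw [integral_pow]
    norm_num [hL3]
    ring
  have hI : (∫ ξ in (0:ℝ)..L, c * (ξ^(2*s+2) + (5*τ)^s * ξ^2))
      = c * K * τ^(s+3/2) := by
    rw [intervalIntegral.integral_const_mul,
      intervalIntegral.integral_add hint_rpow
        (((continuous_pow 2).intervalIntegrable _ _).const_mul _),
      intervalIntegral.integral_const_mul, hI1, hI2, hK]
    linear_combination (8/3*c) * h5τ
  rw [hI]
  calc c * K * τ^(s+3/2) = (26^|b| * K * τ^(2*b)) * τ^(s+3/2) := by rw [hc]; ring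
    _ ≤ (26^|b| * K * τ^(2*b)) * (1 + τ^(s+3/2)) := by
        apply mul_le_mul_of_nonneg_left (by linarith [Real.rpow_pos_of_pos hτ0 (s+3/2)])
        positivity
    _ = 26^|b| * K * τ^(2*b) * (1 + τ^(s+3/2)) := by ring
end

section
/- Let s < 3/2, b ∈ ℝ with b < -s/2 + 3/4, and δ ∈ (0, 1/2]. For τ ≥ 1 define D(τ) = ∫_{δ√τ}^{∞} ⟨ξ⟩^{2s} ⟨τ + ξ²⟩^{2b−2} dξ. Then there exists C = C(s, b, δ) such that D(τ) ≤ C τ^{s + 2b − 3/2} for all τ ≥ 1. -/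
open MeasureTheory Real
set_option maxHeartbeats 1000000

private lemma pow_sandwich {x y c e : ℝ} (hx : 0 < x) (hxy : x ≤ y) (hyc : y ≤ c * x)
    (hc : 1 ≤ c) : y ^ e ≤ c ^ |e| * x ^ e := by
  rcases le_or_gt 0 e with he | he
  · rw [abs_of_nonneg he]
    calc y ^ e ≤ (c * x) ^ e := Real.rpow_le_rpow (hx.le.trans hxy) hyc he
    _ = c ^ e * x ^ e := Real.mul_rpow (by linarith) hx.le
  · rw [abs_of_neg he]
    have h1 : y ^ e ≤ x ^ e := Real.rpow_le_rpow_of_nonpos hx hxy he.le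
    have h2 : (1:ℝ) ≤ c ^ (-e) := by
      calc (1:ℝ) = c ^ (0:ℝ) := (Real.rpow_zero c).symm
      _ ≤ c ^ (-e) := Real.rpow_le_rpow_of_exponent_le hc (by linarith)
    nlinarith [Real.rpow_nonneg hx.le e]

theorem stmt8 (s b δ : ℝ) (hs : s < 3/2) (hb : b < -s/2 + 3/4)
    (hδ0 : 0 < δ) (hδ : δ ≤ 1/2) :
    ∃ C > 0, ∀ τ : ℝ, 1 ≤ τ →
      (∫ ξ in Set.Ioi (δ * Real.sqrt τ),
          (Real.sqrt (1 + ξ ^ 2)) ^ (2 * s) *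
          (Real.sqrt (1 + (τ + ξ ^ 2) ^ 2)) ^ (2 * b - 2)) ≤
        C * τ ^ (s + 2 * b - 3/2) := by
  have hinv : (0:ℝ) < δ⁻¹ ^ 2 := by positivity
  have hδδ : δ * δ⁻¹ = 1 := mul_inv_cancel₀ hδ0.ne'
  have hc₁1 : (1:ℝ) ≤ 1 + δ⁻¹ ^ 2 := by linarith
  have hc₂1 : (1:ℝ) ≤ 2 * (1 + δ⁻¹ ^ 2) ^ 2 := by nlinarith
  have hKpos : 0 < (1 + δ⁻¹ ^ 2) ^ |s| * (2 * (1 + δ⁻¹ ^ 2) ^ 2) ^ |b - 1| :=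
    mul_pos (Real.rpow_pos_of_pos (by linarith) _) (Real.rpow_pos_of_pos (by linarith) _)
  have hLpos : (0:ℝ) < 3 - 2 * s - 4 * b := by linarith
  have hp : 2 * s + 4 * b - 4 < -1 := by linarith
  refine ⟨(1 + δ⁻¹ ^ 2) ^ |s| * (2 * (1 + δ⁻¹ ^ 2) ^ 2) ^ |b - 1|
      * δ ^ (2 * s + 4 * b - 3) / (3 - 2 * s - 4 * b),
    div_pos (mul_pos hKpos (Real.rpow_pos_of_pos hδ0 _)) hLpos, fun τ hτ => ?_⟩
  have hτ0 : (0:ℝ) < τ := by linarith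
  have hsτ : 1 ≤ Real.sqrt τ := by
    rw [show (1:ℝ) = Real.sqrt 1 by simp]
    exact Real.sqrt_le_sqrt hτ
  have ha0 : 0 < δ * Real.sqrt τ := by positivity
  have haδ : δ ≤ δ * Real.sqrt τ := by nlinarith
  -- pointwise bound
  have key : ∀ ξ ∈ Set.Ioi (δ * Real.sqrt τ),
      (Real.sqrt (1 + ξ ^ 2)) ^ (2 * s) *
        (Real.sqrt (1 + (τ + ξ ^ 2) ^ 2)) ^ (2 * b - 2)
        ≤ ((1 + δ⁻¹ ^ 2) ^ |s| * (2 * (1 + δ⁻¹ ^ 2) ^ 2) ^ |b - 1|)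
            * ξ ^ (2 * s + 4 * b - 4) := by
    intro ξ hξ
    have hξa : δ * Real.sqrt τ < ξ := hξ
    have hξ0 : 0 < ξ := lt_of_lt_of_le ha0 hξa.le
    have hξδ : δ ≤ ξ := le_trans haδ hξa.le
    have hτle : τ ≤ δ⁻¹ ^ 2 * ξ ^ 2 := by
      have h2 : δ ^ 2 * τ ≤ ξ ^ 2 := by
        have := Real.sq_sqrt hτ0.le
        nlinarith [Real.sqrt_nonneg τ]
      have h3 : δ⁻¹ ^ 2 * (δ ^ 2 * τ) ≤ δ⁻¹ ^ 2 * ξ ^ 2 :=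
        mul_le_mul_of_nonneg_left h2 (by positivity)
      calc τ = δ⁻¹ ^ 2 * (δ ^ 2 * τ) := by field_simp
      _ ≤ _ := h3
    have e1 : (Real.sqrt (1 + ξ ^ 2)) ^ (2 * s) = (1 + ξ ^ 2) ^ s := by
      rw [Real.sqrt_eq_rpow, ← Real.rpow_mul (by positivity)]
      congr 1; ring
    have e2 : (Real.sqrt (1 + (τ + ξ ^ 2) ^ 2)) ^ (2 * b - 2)
        = (1 + (τ + ξ ^ 2) ^ 2) ^ (b - 1) := by
      rw [Real.sqrt_eq_rpow, ← Real.rpow_mul (by positivity)]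
      congr 1; ring
    rw [e1, e2]
    have hδsq : δ ^ 2 ≤ ξ ^ 2 := by nlinarith
    have hone : (1:ℝ) ≤ δ⁻¹ ^ 2 * ξ ^ 2 := by
      have h5 : δ⁻¹ ^ 2 * δ ^ 2 = 1 := by field_simp
      calc (1:ℝ) = δ⁻¹ ^ 2 * δ ^ 2 := h5.symm
      _ ≤ δ⁻¹ ^ 2 * ξ ^ 2 := mul_le_mul_of_nonneg_left hδsq hinv.le
    have h1 : (1 + ξ ^ 2) ^ s ≤ (1 + δ⁻¹ ^ 2) ^ |s| * (ξ ^ 2) ^ s := by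
      apply pow_sandwich (by positivity) (by linarith) ?_ hc₁1
      calc 1 + ξ ^ 2 ≤ δ⁻¹ ^ 2 * ξ ^ 2 + ξ ^ 2 := by linarith
      _ = (1 + δ⁻¹ ^ 2) * ξ ^ 2 := by ring
    have ht1 : (1:ℝ) ≤ τ + ξ ^ 2 := by nlinarith [sq_nonneg ξ]
    have ht2 : τ + ξ ^ 2 ≤ (1 + δ⁻¹ ^ 2) * ξ ^ 2 := by
      calc τ + ξ ^ 2 ≤ δ⁻¹ ^ 2 * ξ ^ 2 + ξ ^ 2 := by linarith
      _ = (1 + δ⁻¹ ^ 2) * ξ ^ 2 := by ring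
    have h2 : (1 + (τ + ξ ^ 2) ^ 2) ^ (b - 1)
        ≤ (2 * (1 + δ⁻¹ ^ 2) ^ 2) ^ |b - 1| * (ξ ^ 4) ^ (b - 1) := by
      apply pow_sandwich (by positivity) ?_ ?_ hc₂1
      · have h7 : (ξ ^ 2) ^ 2 ≤ (τ + ξ ^ 2) ^ 2 :=
          pow_le_pow_left₀ (sq_nonneg ξ) (by linarith) 2
        calc ξ ^ 4 = (ξ ^ 2) ^ 2 := by ring
        _ ≤ (τ + ξ ^ 2) ^ 2 := h7
        _ ≤ 1 + (τ + ξ ^ 2) ^ 2 := by linarith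
      · have hsq : (τ + ξ ^ 2) ^ 2 ≤ ((1 + δ⁻¹ ^ 2) * ξ ^ 2) ^ 2 :=
          pow_le_pow_left₀ (by linarith) ht2 2
        have hsq1 : (1:ℝ) ≤ (τ + ξ ^ 2) ^ 2 := by nlinarith [ht1]
        calc 1 + (τ + ξ ^ 2) ^ 2 ≤ 2 * (τ + ξ ^ 2) ^ 2 := by linarith
        _ ≤ 2 * ((1 + δ⁻¹ ^ 2) * ξ ^ 2) ^ 2 := by linarith
        _ = 2 * (1 + δ⁻¹ ^ 2) ^ 2 * ξ ^ 4 := by ring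
    have hB : (0:ℝ) ≤ (1 + δ⁻¹ ^ 2) ^ |s| * (ξ ^ 2) ^ s := by positivity
    have hC : (0:ℝ) ≤ (1 + (τ + ξ ^ 2) ^ 2) ^ (b - 1) := Real.rpow_nonneg (by positivity) _
    calc (1 + ξ ^ 2) ^ s * (1 + (τ + ξ ^ 2) ^ 2) ^ (b - 1)
        ≤ ((1 + δ⁻¹ ^ 2) ^ |s| * (ξ ^ 2) ^ s)
            * ((2 * (1 + δ⁻¹ ^ 2) ^ 2) ^ |b - 1| * (ξ ^ 4) ^ (b - 1)) :=
          mul_le_mul h1 h2 hC hB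
      _ = ((1 + δ⁻¹ ^ 2) ^ |s| * (2 * (1 + δ⁻¹ ^ 2) ^ 2) ^ |b - 1|)
            * ((ξ ^ 2) ^ s * (ξ ^ 4) ^ (b - 1)) := by ring
      _ = ((1 + δ⁻¹ ^ 2) ^ |s| * (2 * (1 + δ⁻¹ ^ 2) ^ 2) ^ |b - 1|)
            * ξ ^ (2 * s + 4 * b - 4) := by
          congr 1
          rw [show ξ ^ 2 = ξ ^ ((2:ℕ):ℝ) by rw [Real.rpow_natCast],
            show ξ ^ 4 = ξ ^ ((4:ℕ):ℝ) by rw [Real.rpow_natCast],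
            ← Real.rpow_mul hξ0.le, ← Real.rpow_mul hξ0.le,
            ← Real.rpow_add hξ0]
          congr 1
          push_cast
          ring
  have hgint : IntegrableOn
      (fun ξ : ℝ => ((1 + δ⁻¹ ^ 2) ^ |s| * (2 * (1 + δ⁻¹ ^ 2) ^ 2) ^ |b - 1|)
        * ξ ^ (2 * s + 4 * b - 4)) (Set.Ioi (δ * Real.sqrt τ)) :=
    (integrableOn_Ioi_rpow_of_lt hp ha0).const_mul _
  have hmono := integral_mono_of_nonneg
    (f := fun ξ => (Real.sqrt (1 + ξ ^ 2)) ^ (2 * s) *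
          (Real.sqrt (1 + (τ + ξ ^ 2) ^ 2)) ^ (2 * b - 2))
    (g := fun ξ : ℝ => ((1 + δ⁻¹ ^ 2) ^ |s| * (2 * (1 + δ⁻¹ ^ 2) ^ 2) ^ |b - 1|)
        * ξ ^ (2 * s + 4 * b - 4))
    (μ := volume.restrict (Set.Ioi (δ * Real.sqrt τ)))
    (Filter.Eventually.of_forall fun ξ => by positivity)
    hgint
    ((ae_restrict_iff' measurableSet_Ioi).2 (Filter.Eventually.of_forall key))
  refine hmono.trans ?_
  rw [integral_const_mul _ _, integral_Ioi_rpow_of_lt hp ha0]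
  have hea : (δ * Real.sqrt τ) ^ (2 * s + 4 * b - 4 + 1)
      = δ ^ (2 * s + 4 * b - 3) * τ ^ (s + 2 * b - 3/2) := by
    rw [Real.mul_rpow hδ0.le (Real.sqrt_nonneg τ), Real.sqrt_eq_rpow,
      ← Real.rpow_mul hτ0.le]
    congr 1 <;> · congr 1; ring
  rw [hea, show (2 * s + 4 * b - 4 + 1 : ℝ) = -(3 - 2 * s - 4 * b) by ring,
    neg_div_neg_eq]
  exact le_of_eq (by ring)
end

section
/- Let f : ℝ → ℝ be a C^∞ function with 0 ≤ f ≤ 1, f(x) = 1 for x ≤ δ, f(x) = 0 for x ≥ a₁ := δ + 1/√τ, and |f(x) − f(y)| ≤ B√τ |x − y| for all x, y, where δ ∈ (0, 1/2], τ ≥ 1, B > 0. Then for any m with a₁ ≤ m ≤ 2, the principal value integral F₃₁(m) = ∫_0^{a₁} f(n)/(m² − n²) dn satisfies |F₃₁(m)| ≤ C(δ, B)(1 + ln τ). -/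
open MeasureTheory Real

theorem stmt9 (δ B : ℝ) (hδ0 : 0 < δ) (hδ : δ ≤ 1/2) (hB : 0 < B) :
    ∃ C > 0, ∀ τ : ℝ, 1 ≤ τ → ∀ f : ℝ → ℝ,
      ContDiff ℝ (⊤ : ℕ∞) f →
      (∀ x, 0 ≤ f x) → (∀ x, f x ≤ 1) →
      (∀ x, x ≤ δ → f x = 1) →
      (∀ x, x ≥ δ + 1 / Real.sqrt τ → f x = 0) →
      (∀ x y, |f x - f y| ≤ B * Real.sqrt τ * |x - y|) →
      ∀ m : ℝ, δ + 1 / Real.sqrt τ ≤ m → m ≤ 2 →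
        |∫ n in (0:ℝ)..(δ + 1 / Real.sqrt τ), f n / (m ^ 2 - n ^ 2)| ≤
          C * (1 + Real.log τ) := by
  refine ⟨(B + 1) / δ, by positivity, ?_⟩
  intro τ hτ f hf hf0 hf1 hfδ hfa hlip m hma hm2
  set s := Real.sqrt τ with hs
  have hs1 : 1 ≤ s := by
    have := Real.sqrt_le_sqrt hτ
    simpa [hs] using this
  have hs0 : (0:ℝ) < s := lt_of_lt_of_le one_pos hs1
  set a := δ + 1 / s with ha
  have hinv0 : 0 < 1 / s := by positivity
  have hinv1 : 1 / s ≤ 1 := by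
    rw [div_le_one hs0]; exact hs1
  have hδa : δ < a := by simp only [ha]; linarith
  have ha0 : 0 < a := lt_trans hδ0 hδa
  have ha2 : a ≤ 2 := le_trans hma hm2
  have hfa0 : f a = 0 := hfa a (le_refl a)
  set g := fun n : ℝ => f n / (m ^ 2 - n ^ 2) with hg
  -- denominator lower bound
  have hden : ∀ n ∈ Set.Icc (0:ℝ) a, δ * (a - n) ≤ m ^ 2 - n ^ 2 := by
    intro n hn
    obtain ⟨hn0, hna⟩ := hn
    nlinarith [hma, hδ0.le]
  have hgnn : ∀ n ∈ Set.Icc (0:ℝ) a, 0 ≤ g n := by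
    intro n hn
    apply div_nonneg (hf0 n)
    have h1 := hden n hn
    nlinarith [hδ0.le, hn.1, hn.2]
  -- bound by B * s / δ on [0, a]
  have hgB : ∀ n ∈ Set.Icc (0:ℝ) a, g n ≤ B * s / δ := by
    intro n hn
    obtain ⟨hn0, hna⟩ := hn
    rcases eq_or_lt_of_le hna with h | h
    · have hfn : f n = 0 := hfa n (by rw [h])
      simp only [hg, hfn, zero_div]
      positivity
    · have hane : (0:ℝ) < a - n := by linarith
      have hd0 : 0 < δ * (a - n) := by positivity
      have hfn : f n ≤ B * s * (a - n) := by
        have hl := hlip n a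
        rw [hfa0, sub_zero] at hl
        have habs : |n - a| = a - n := by
          rw [abs_sub_comm]; exact abs_of_nonneg hane.le
        calc f n ≤ |f n| := le_abs_self _
          _ ≤ B * s * |n - a| := hl
          _ = B * s * (a - n) := by rw [habs]
      have hne : a - n ≠ 0 := ne_of_gt hane
      calc g n ≤ (B * s * (a - n)) / (δ * (a - n)) :=
            div_le_div₀ (by positivity) hfn hd0 (hden n ⟨hn0, hna⟩)
        _ = B * s / δ := by field_simp
  -- bound on [0, δ]
  have hgC : ∀ n ∈ Set.Icc (0:ℝ) δ, g n ≤ (δ * (a - n))⁻¹ := by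
    intro n hn
    obtain ⟨hn0, hnδ⟩ := hn
    have hane : (0:ℝ) < a - n := by linarith
    have hd0 : 0 < δ * (a - n) := by positivity
    have h1 : g n ≤ 1 / (δ * (a - n)) :=
      div_le_div₀ zero_le_one (hf1 n) hd0 (hden n ⟨hn0, by linarith⟩)
    rwa [one_div] at h1
  -- measurability & integrability
  have hmeas : Measurable g := by
    exact (hf.continuous.measurable).div
      ((continuous_const.sub (continuous_pow 2)).measurable)
  have hint : IntervalIntegrable g volume 0 a := by
    rw [intervalIntegrable_iff_integrableOn_Ioc_of_le ha0.le]
    apply Measure.integrableOn_of_bounded (measure_Ioc_lt_top).ne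
      hmeas.aestronglyMeasurable
    filter_upwards [ae_restrict_mem measurableSet_Ioc] with n hn
    rw [Real.norm_eq_abs, abs_of_nonneg (hgnn n ⟨hn.1.le, hn.2⟩)]
    exact hgB n ⟨hn.1.le, hn.2⟩
  have hint1 : IntervalIntegrable g volume 0 δ := by
    apply hint.mono_set
    rw [Set.uIcc_of_le hδ0.le, Set.uIcc_of_le ha0.le]
    exact Set.Icc_subset_Icc le_rfl hδa.le
  have hint2 : IntervalIntegrable g volume δ a := by
    apply hint.mono_set
    rw [Set.uIcc_of_le hδa.le, Set.uIcc_of_le ha0.le]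
    exact Set.Icc_subset_Icc hδ0.le le_rfl
  -- comparator integrability
  have hcompcont : ContinuousOn (fun n : ℝ => (δ * (a - n))⁻¹) (Set.uIcc 0 δ) := by
    apply ContinuousOn.inv₀
    · exact (continuous_const.mul (continuous_const.sub continuous_id)).continuousOn
    · intro n hn
      rw [Set.uIcc_of_le hδ0.le] at hn
      have : 0 < a - n := by linarith [hn.2]
      exact ne_of_gt (by positivity)
  have hintcomp : IntervalIntegrable (fun n : ℝ => (δ * (a - n))⁻¹) volume 0 δ :=
    hcompcont.intervalIntegrable
  -- value of comparator integral
  have hcompval : ∫ n in (0:ℝ)..δ, (δ * (a - n))⁻¹ = δ⁻¹ * Real.log (a * s) := by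
    have e1 : ∀ n : ℝ, (δ * (a - n))⁻¹ = δ⁻¹ * (a - n)⁻¹ := fun n => by
      rw [mul_inv]
    simp_rw [e1]
    rw [intervalIntegral.integral_const_mul]
    congr 1
    have e2 : (∫ n in (0:ℝ)..δ, (a - n)⁻¹) = ∫ x in (a - δ)..(a - 0), x⁻¹ :=
      intervalIntegral.integral_comp_sub_left (fun u : ℝ => u⁻¹) a
    rw [e2]
    rw [sub_zero]
    rw [integral_inv]
    · congr 1
      have : a - δ = 1 / s := by simp [ha]
      rw [this]
      field_simp
    · rw [Set.uIcc_of_le (by linarith)]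
      intro hmem
      have h1 : 0 < a - δ := by linarith
      exact absurd hmem.1 (not_le.mpr h1)
  -- bound part 1
  have h1 : ∫ n in (0:ℝ)..δ, g n ≤ δ⁻¹ * Real.log (a * s) := by
    rw [← hcompval]
    exact intervalIntegral.integral_mono_on hδ0.le hint1 hintcomp hgC
  -- bound part 2
  have h2 : ∫ n in δ..a, g n ≤ B / δ := by
    have hm := intervalIntegral.integral_mono_on hδa.le hint2
      (intervalIntegrable_const (c := B * s / δ))
      (fun n hn => hgB n ⟨le_trans hδ0.le hn.1, hn.2⟩)
    rw [intervalIntegral.integral_const, smul_eq_mul] at hm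
    have e : (a - δ) * (B * s / δ) = B / δ := by
      have : a - δ = 1 / s := by simp [ha]
      rw [this]; field_simp
    linarith [hm, e.le]
  -- log bound
  have hlog : Real.log (a * s) ≤ 1 + Real.log τ := by
    have hb1 : a * s ≤ 2 * s := by nlinarith
    have hb2 : Real.log (a * s) ≤ Real.log (2 * s) :=
      Real.log_le_log (by positivity) hb1
    rw [Real.log_mul two_ne_zero (ne_of_gt hs0)] at hb2
    have hb3 : Real.log s = Real.log τ / 2 := by
      rw [hs, Real.log_sqrt (by linarith)]
    have hb4 : Real.log 2 ≤ 1 := by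
      have := Real.log_le_sub_one_of_pos (show (0:ℝ) < 2 by norm_num)
      linarith
    have hb5 : 0 ≤ Real.log τ := Real.log_nonneg hτ
    linarith
  -- combine
  have hsplit : (∫ n in (0:ℝ)..a, g n) = (∫ n in (0:ℝ)..δ, g n) + ∫ n in δ..a, g n :=
    (intervalIntegral.integral_add_adjacent_intervals hint1 hint2).symm
  have hnn : 0 ≤ ∫ n in (0:ℝ)..a, g n :=
    intervalIntegral.integral_nonneg ha0.le (fun n hn => hgnn n hn)
  rw [abs_of_nonneg hnn]
  have hδinv : (0:ℝ) ≤ δ⁻¹ := by positivity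
  have hA : δ⁻¹ * Real.log (a * s) ≤ δ⁻¹ * (1 + Real.log τ) :=
    mul_le_mul_of_nonneg_left hlog hδinv
  have hone : (1:ℝ) ≤ 1 + Real.log τ := by
    linarith [Real.log_nonneg hτ]
  have hBd : B / δ ≤ (B / δ) * (1 + Real.log τ) :=
    le_mul_of_one_le_right (by positivity) hone
  have hfinal : (B + 1) / δ * (1 + Real.log τ)
      = δ⁻¹ * (1 + Real.log τ) + (B / δ) * (1 + Real.log τ) := by
    field_simp; ring
  rw [hsplit, hfinal]
  linarith
end

section
/- Let δ ∈ (0, 1/2] and 0 < m ≤ δ/2. Then the principal value integral ∫_0^δ dn/(m² − n²) satisfies |∫_0^δ dn/(m² − n²)| ≤ 4/(3δ). -/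
/-!
With `F n = (log (m + n) - log (m - n)) / (2m)`, a primitive of `1 / (m² - n²)` away from `±m`,
the truncated integral equals `F δ - (F (m + ε) - F (m - ε))`, and the bracket tends to `0` because
`log` only sees `|m - n|`. So the principal value is `log ((δ + m) / (δ - m)) / (2m) ≥ 0`, and
the series bound `½ log ((1 + t) / (1 - t)) ≤ t / (1 - t²)` at `t = m / δ ≤ 1/2` gives at most
`δ / (δ² - m²) ≤ 4 / (3δ)`.
-/

open MeasureTheory Real Filter

open Set Topology

-- Since `Real.log x = Real.log |x|`, this is a primitive of `1 / (m² - n²)` on every interval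
-- avoiding `±m`.
noncomputable def primitiveInvSqSubSq (m n : ℝ) : ℝ := (log (m + n) - log (m - n)) / (2 * m)

lemma hasDerivAt_primitiveInvSqSubSq {m n : ℝ} (hm : m ≠ 0) (hn : n ^ 2 ≠ m ^ 2) :
    HasDerivAt (primitiveInvSqSubSq m) (1 / (m ^ 2 - n ^ 2)) n := by
  have hsub : m ^ 2 - n ^ 2 ≠ 0 := sub_ne_zero.2 hn.symm
  have h₁ : m + n ≠ 0 := fun h => hsub (by rw [show m = -n by linarith]; ring)
  have h₂ : m - n ≠ 0 := fun h => hsub (by rw [show m = n by linarith]; ring)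
  have hlog₁ := ((hasDerivAt_id' n).const_add m).log h₁
  have hlog₂ := ((hasDerivAt_id' n).const_sub m).log h₂
  refine ((hlog₁.sub hlog₂).div_const (2 * m)).congr_deriv ?_
  field_simp
  ring

lemma integral_one_div_sq_sub_sq {m a b : ℝ} (hm : m ≠ 0) (h : ∀ n ∈ uIcc a b, n ^ 2 ≠ m ^ 2) :
    ∫ n in a..b, 1 / (m ^ 2 - n ^ 2) = primitiveInvSqSubSq m b - primitiveInvSqSubSq m a := by
  refine intervalIntegral.integral_eq_sub_of_hasDerivAt
    (fun n hn => hasDerivAt_primitiveInvSqSubSq hm (h n hn)) ?_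
  refine ContinuousOn.intervalIntegrable (continuousOn_const.div (by fun_prop) fun n hn => ?_)
  exact sub_ne_zero.2 (h n hn).symm

lemma primitiveInvSqSubSq_symmetric_difference (m ε : ℝ) :
    primitiveInvSqSubSq m (m + ε) - primitiveInvSqSubSq m (m - ε) =
      (log (2 * m + ε) - log (2 * m - ε)) / (2 * m) := by
  simp only [primitiveInvSqSubSq, sub_sub_cancel, sub_add_cancel_left, log_neg_eq_log]
  ring_nf

lemma tendsto_primitiveInvSqSubSq_symmetric_difference {m : ℝ} (hm : m ≠ 0) :
    Tendsto (fun ε => primitiveInvSqSubSq m (m + ε) - primitiveInvSqSubSq m (m - ε)) (𝓝 0)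
      (𝓝 0) := by
  simp only [primitiveInvSqSubSq_symmetric_difference]
  have h2m : 2 * m ≠ 0 := mul_ne_zero two_ne_zero hm
  have hcont : ContinuousAt (fun ε => (log (2 * m + ε) - log (2 * m - ε)) / (2 * m)) 0 := by
    fun_prop (disch := simpa)
  simpa using hcont.tendsto

lemma principalValue_eq_primitiveInvSqSubSq {m δ ε : ℝ} (hm : 0 < m) (hε : 0 < ε)
    (hεm : ε < m) (hεδ : ε < δ - m) :
    (∫ n in (0 : ℝ)..(m - ε), 1 / (m ^ 2 - n ^ 2)) + ∫ n in (m + ε)..δ, 1 / (m ^ 2 - n ^ 2) =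
      primitiveInvSqSubSq m δ -
        (primitiveInvSqSubSq m (m + ε) - primitiveInvSqSubSq m (m - ε)) := by
  have below : ∀ n ∈ uIcc 0 (m - ε), n ^ 2 ≠ m ^ 2 := by
    rw [uIcc_of_le (by linarith)]
    rintro n ⟨hn₀, hn⟩
    nlinarith
  have above : ∀ n ∈ uIcc (m + ε) δ, n ^ 2 ≠ m ^ 2 := by
    rw [uIcc_of_le (by linarith)]
    rintro n ⟨hn, -⟩
    nlinarith
  rw [integral_one_div_sq_sub_sq hm.ne' below, integral_one_div_sq_sub_sq hm.ne' above]
  simp only [primitiveInvSqSubSq, add_zero, sub_zero, sub_self, zero_div]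
  ring

lemma tendsto_principalValue {m δ : ℝ} (hm : 0 < m) (hmδ : m < δ) :
    Tendsto (fun ε => (∫ n in (0 : ℝ)..(m - ε), 1 / (m ^ 2 - n ^ 2)) +
        ∫ n in (m + ε)..δ, 1 / (m ^ 2 - n ^ 2)) (𝓝[>] 0) (𝓝 (primitiveInvSqSubSq m δ)) := by
  have hsmall : ∀ᶠ ε in 𝓝[>] (0 : ℝ), ε ∈ Ioo 0 (min m (δ - m)) :=
    Ioo_mem_nhdsGT (lt_min hm (sub_pos.2 hmδ))
  have heq := hsmall.mono fun ε ⟨hε, hεmin⟩ =>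
    (principalValue_eq_primitiveInvSqSubSq hm hε (hεmin.trans_le (min_le_left _ _))
      (hεmin.trans_le (min_le_right _ _))).symm
  refine Tendsto.congr' heq ?_
  simpa using tendsto_const_nhds.sub
    ((tendsto_primitiveInvSqSubSq_symmetric_difference hm.ne').mono_left nhdsWithin_le_nhds)

lemma primitiveInvSqSubSq_eq_log_div {m δ : ℝ} (hm : 0 < m) (hmδ : m < δ) :
    primitiveInvSqSubSq m δ = log ((δ + m) / (δ - m)) / (2 * m) := by
  rw [primitiveInvSqSubSq, log_div (by linarith) (by linarith), ← log_neg_eq_log (m - δ)]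
  ring_nf

lemma primitiveInvSqSubSq_nonneg {m δ : ℝ} (hm : 0 < m) (hmδ : m < δ) :
    0 ≤ primitiveInvSqSubSq m δ := by
  rw [primitiveInvSqSubSq_eq_log_div hm hmδ]
  have : 1 ≤ (δ + m) / (δ - m) := by rw [le_div_iff₀ (by linarith)]; linarith
  exact div_nonneg (log_nonneg this) (by positivity)

lemma primitiveInvSqSubSq_le {m δ : ℝ} (hm : 0 < m) (hmδ : m < δ) :
    primitiveInvSqSubSq m δ ≤ δ / (δ ^ 2 - m ^ 2) := by
  have hδ : 0 < δ := hm.trans hmδ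
  have ht : m / δ < 1 := (div_lt_one hδ).2 hmδ
  have hlog := log_div_le_sum_range_add (div_nonneg hm.le hδ.le) ht 0
  have hratio : (1 + m / δ) / (1 - m / δ) = (δ + m) / (δ - m) := by
    field_simp
  rw [hratio] at hlog
  rw [primitiveInvSqSubSq_eq_log_div hm hmδ]
  have : m / δ / (1 - (m / δ) ^ 2) = m * (δ / (δ ^ 2 - m ^ 2)) := by
    field_simp
  simp only [Finset.range_zero, Finset.sum_empty, zero_add, mul_zero, pow_one, this] at hlog
  rw [div_le_iff₀ (by positivity)]
  linarith

theorem stmt10_general (δ m : ℝ)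
    (hm0 : 0 < m) (hm : m ≤ δ / 2) :
    ∃ I : ℝ,
      Filter.Tendsto
        (fun ε : ℝ =>
          (∫ n in (0:ℝ)..(m - ε), 1 / (m ^ 2 - n ^ 2)) +
          ∫ n in (m + ε)..δ, 1 / (m ^ 2 - n ^ 2))
        (nhdsWithin 0 (Set.Ioi 0)) (nhds I) ∧
      |I| ≤ 4 / (3 * δ) := by
  have hmδ : m < δ := by linarith
  refine ⟨primitiveInvSqSubSq m δ, tendsto_principalValue hm0 hmδ, ?_⟩
  rw [abs_of_nonneg (primitiveInvSqSubSq_nonneg hm0 hmδ)]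
  calc primitiveInvSqSubSq m δ ≤ δ / (δ ^ 2 - m ^ 2) := primitiveInvSqSubSq_le hm0 hmδ
    _ ≤ 4 / (3 * δ) := by
      rw [div_le_div_iff₀ (by nlinarith) (by linarith)]
      nlinarith

theorem stmt10 (δ m : ℝ) (hδ0 : 0 < δ) (hδ : δ ≤ 1/2)
    (hm0 : 0 < m) (hm : m ≤ δ / 2) :
    ∃ I : ℝ,
      Filter.Tendsto
        (fun ε : ℝ =>
          (∫ n in (0:ℝ)..(m - ε), 1 / (m ^ 2 - n ^ 2)) +
          ∫ n in (m + ε)..δ, 1 / (m ^ 2 - n ^ 2))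
        (nhdsWithin 0 (Set.Ioi 0)) (nhds I) ∧
      |I| ≤ 4 / (3 * δ) :=
  stmt10_general δ m hm0 hm
end

section
/- For any m ≥ 2 and a₁ ∈ (0, 3/2], one has |∫_{a₁}^∞ n² / ((m² − n²)(n² + 1)) dn| ≤ C/m² for an absolute constant C, where the integral is a principal value around n = m. -/
/-!
Partial fractions give `n²/((m²−n²)(n²+1)) = (m²/(m²−n²) − 1/(n²+1))/(m²+1)`, so the integrand
has the explicit primitive `F n = ((m/2)(log|m+n| − log|m−n|) − arctan n)/(m²+1)` on each side of
the pole. In the principal value the singular terms `log|m − (m ± ε)|` cancel, and `F n → −(π/2)/(m²+1)`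
as `n → ∞`, so the principal value equals `−(π/2)/(m²+1) − F a₁`. For `0 < a₁ ≤ 3/2` and `m ≥ 2` the
logarithmic part of `F a₁` is at most `(m/2)·2a₁/(m−a₁) ≤ 6`, which bounds the value by `8/(m²+1)`.
-/

open MeasureTheory Real Filter Topology Set

noncomputable def pvIntegrand (m n : ℝ) : ℝ :=
  n ^ 2 / ((m ^ 2 - n ^ 2) * (n ^ 2 + 1))

/-- `Real.log` is `log |·|`, so this is a primitive of `pvIntegrand m` away from `n = ±m`. -/
noncomputable def pvPrimitive (m n : ℝ) : ℝ :=
  (m / 2 * (log (m + n) - log (m - n)) - arctan n) / (m ^ 2 + 1)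

lemma hasDerivAt_pvPrimitive {m n : ℝ} (h : n ^ 2 ≠ m ^ 2) :
    HasDerivAt (pvPrimitive m) (pvIntegrand m n) n := by
  have hadd : m + n ≠ 0 := fun h' => h (by rw [show n = -m by linarith]; ring)
  have hsub : m - n ≠ 0 := fun h' => h (by rw [show n = m by linarith])
  have hlog_add : HasDerivAt (fun x => log (m + x)) (m + n)⁻¹ n := by
    simpa using ((hasDerivAt_id n).const_add m).log hadd
  have hlog_sub : HasDerivAt (fun x => log (m - x)) (-(m - n)⁻¹) n := by
    simpa [neg_div] using ((hasDerivAt_id n).const_sub m).log hsub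
  refine ((((hlog_add.sub hlog_sub).const_mul (m / 2)).sub
    (hasDerivAt_arctan n)).div_const (m ^ 2 + 1)).congr_deriv ?_
  have hsq : m ^ 2 - n ^ 2 ≠ 0 := sub_ne_zero.mpr (Ne.symm h)
  unfold pvIntegrand
  field_simp
  ring

lemma integral_pvIntegrand {m a b : ℝ} (h : ∀ n ∈ uIcc a b, n ^ 2 ≠ m ^ 2) :
    ∫ n in a..b, pvIntegrand m n = pvPrimitive m b - pvPrimitive m a := by
  refine intervalIntegral.integral_eq_sub_of_hasDerivAt
    (fun n hn => hasDerivAt_pvPrimitive (h n hn)) (ContinuousOn.intervalIntegrable ?_)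
  refine ContinuousOn.div (by fun_prop) (by fun_prop) fun n hn => ?_
  exact mul_ne_zero (sub_ne_zero.mpr (Ne.symm (h n hn))) (by positivity)

lemma pvPrimitive_sub_pvPrimitive (m ε : ℝ) :
    pvPrimitive m (m - ε) - pvPrimitive m (m + ε) =
      (m / 2 * (log (2 * m - ε) - log (2 * m + ε)) - arctan (m - ε) + arctan (m + ε)) /
        (m ^ 2 + 1) := by
  unfold pvPrimitive
  rw [show m - (m + ε) = -ε by ring, log_neg_eq_log]
  ring_nf

lemma tendsto_pvPrimitive_sub_pvPrimitive {m : ℝ} (hm : m ≠ 0) :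
    Tendsto (fun ε => pvPrimitive m (m - ε) - pvPrimitive m (m + ε)) (𝓝 0) (𝓝 0) := by
  simp only [pvPrimitive_sub_pvPrimitive]
  have h2m : 2 * m ≠ 0 := by simpa using hm
  have hcont : ContinuousAt (fun ε => (m / 2 * (log (2 * m - ε) - log (2 * m + ε)) -
      arctan (m - ε) + arctan (m + ε)) / (m ^ 2 + 1)) 0 := by
    fun_prop (disch := simpa using h2m)
  simpa using hcont.tendsto

lemma tendsto_pvPrimitive_atTop (m : ℝ) :
    Tendsto (pvPrimitive m) atTop (𝓝 (-(π / 2) / (m ^ 2 + 1))) := by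
  have hlog : Tendsto (fun b => log (m + b) - log (m - b)) atTop (𝓝 0) := by
    have h := (tendsto_log_comp_add_sub_log m).sub (tendsto_log_comp_add_sub_log (-m))
    rw [sub_zero] at h
    refine h.congr fun b => ?_
    rw [← log_neg_eq_log (m - b)]
    ring_nf
  have h := ((hlog.const_mul (m / 2)).sub
    (tendsto_arctan_atTop.mono_right nhdsWithin_le_nhds)).div_const (m ^ 2 + 1)
  rwa [mul_zero, zero_sub] at h

theorem tendsto_pvIntegral {m a : ℝ} (ha : |a| < m) :
    Tendsto (fun p : ℝ × ℝ =>
        (∫ n in a..(m - p.1), pvIntegrand m n) + ∫ n in (m + p.1)..p.2, pvIntegrand m n)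
      (𝓝[>] 0 ×ˢ atTop) (𝓝 (-(π / 2) / (m ^ 2 + 1) - pvPrimitive m a)) := by
  have hm : 0 < m := (abs_nonneg a).trans_lt ha
  have ha_lo : -m < a := neg_lt_of_abs_lt ha
  have hlim : Tendsto (fun p : ℝ × ℝ => (pvPrimitive m (m - p.1) - pvPrimitive m (m + p.1)) +
      (pvPrimitive m p.2 - pvPrimitive m a)) (𝓝[>] 0 ×ˢ atTop)
      (𝓝 (0 + (-(π / 2) / (m ^ 2 + 1) - pvPrimitive m a))) :=
    (((tendsto_pvPrimitive_sub_pvPrimitive hm.ne').mono_left nhdsWithin_le_nhds).comp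
      tendsto_fst).add (((tendsto_pvPrimitive_atTop m).sub_const _).comp tendsto_snd)
  rw [zero_add] at hlim
  refine hlim.congr' ?_
  have hε : ∀ᶠ ε in 𝓝[>] (0 : ℝ), ε ∈ Ioo 0 (m - |a|) :=
    Ioo_mem_nhdsGT (by linarith)
  filter_upwards [hε.prod_inl atTop, (eventually_ge_atTop (2 * m)).prod_inr (𝓝[>] 0)]
    with ⟨ε, b⟩ ⟨hε₀, hεm⟩ hb
  dsimp only at hε₀ hεm hb ⊢
  have hleft : ∀ n ∈ uIcc a (m - ε), n ^ 2 ≠ m ^ 2 := by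
    rw [uIcc_of_le (by linarith [le_abs_self a])]
    exact fun n ⟨hn₁, hn₂⟩ => (sq_lt_sq' (by linarith) (by linarith)).ne
  have hright : ∀ n ∈ uIcc (m + ε) b, n ^ 2 ≠ m ^ 2 := by
    rw [uIcc_of_le (by linarith [abs_nonneg a])]
    exact fun n ⟨hn₁, _⟩ => (pow_lt_pow_left₀ (by linarith) hm.le two_ne_zero).ne'
  rw [integral_pvIntegrand hleft, integral_pvIntegrand hright]
  ring

lemma log_add_sub_log_sub_le {m a : ℝ} (ha : 0 < a) (ham : a < m) :
    log (m + a) - log (m - a) ≤ 2 * a / (m - a) := by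
  have hma : 0 < m - a := by linarith
  have h := log_le_sub_one_of_pos (div_pos (by linarith : 0 < m + a) hma)
  rw [log_div (by linarith) hma.ne'] at h
  calc log (m + a) - log (m - a) ≤ (m + a) / (m - a) - 1 := h
    _ = 2 * a / (m - a) := by field_simp; ring

lemma abs_pvValue_le {m a : ℝ} (hm : 2 ≤ m) (ha : 0 < a) (ha' : a ≤ 3 / 2) :
    |-(π / 2) / (m ^ 2 + 1) - pvPrimitive m a| ≤ 8 / m ^ 2 := by
  set L := log (m + a) - log (m - a)
  have hma : 0 < m - a := by linarith
  have hL₀ : 0 ≤ L := sub_nonneg.mpr (log_le_log hma (by linarith))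
  have hL : m / 2 * L ≤ 6 := calc
    m / 2 * L ≤ m / 2 * (2 * a / (m - a)) :=
      mul_le_mul_of_nonneg_left (log_add_sub_log_sub_le ha (by linarith)) (by linarith)
    _ ≤ 6 := by
      rw [show m / 2 * (2 * a / (m - a)) = m * a / (m - a) by ring, div_le_iff₀ hma]
      nlinarith
  have harctan₀ : 0 < arctan a := arctan_pos.mpr ha
  have harctan₁ : arctan a < π / 2 := arctan_lt_pi_div_two a
  have hnum : |-(π / 2) - m / 2 * L + arctan a| ≤ 8 := by
    rw [abs_le]
    constructor <;> nlinarith [pi_le_four, mul_nonneg (by linarith : 0 ≤ m / 2) hL₀]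
  calc |-(π / 2) / (m ^ 2 + 1) - pvPrimitive m a|
      = |-(π / 2) - m / 2 * L + arctan a| / (m ^ 2 + 1) := by
        rw [show -(π / 2) / (m ^ 2 + 1) - pvPrimitive m a =
            (-(π / 2) - m / 2 * L + arctan a) / (m ^ 2 + 1) by simp only [L, pvPrimitive]; ring,
          abs_div, abs_of_pos (by positivity : (0 : ℝ) < m ^ 2 + 1)]
    _ ≤ 8 / (m ^ 2 + 1) := by gcongr
    _ ≤ 8 / m ^ 2 := by gcongr; linarith

theorem stmt11 :
    ∃ C > 0, ∀ m a₁ : ℝ, 2 ≤ m → 0 < a₁ → a₁ ≤ 3/2 →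
      ∃ I : ℝ,
        Filter.Tendsto
          (fun p : ℝ × ℝ =>
            (∫ n in a₁..(m - p.1), n ^ 2 / ((m ^ 2 - n ^ 2) * (n ^ 2 + 1))) +
            ∫ n in (m + p.1)..p.2, n ^ 2 / ((m ^ 2 - n ^ 2) * (n ^ 2 + 1)))
          ((nhdsWithin 0 (Set.Ioi 0)) ×ˢ Filter.atTop) (nhds I) ∧
        |I| ≤ C / m ^ 2 := by
  refine ⟨8, by norm_num, fun m a₁ hm ha₀ ha₁ => ?_⟩
  have ha : |a₁| < m := by rw [abs_of_pos ha₀]; linarith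
  exact ⟨_, tendsto_pvIntegral ha, abs_pvValue_le hm ha₀ ha₁⟩
end

section
/- Let Θ₁ : ℝ × [1,∞) → ℝ be a measurable bounded function with |Θ₁| ≤ M, supported in {(η, τ) : η ∈ ℝ}. For m ≥ 2 and τ ≥ 1, define F(m√τ, τ) = (1/(m√τ)) PV ∫_0^∞ n²/((m² − n²)(n² + 1)) Θ₁(n√τ, τ) dn, where Θ₁(η,τ) = 2 for η ≤ δ√τ, Θ₁ smooth transition on [δ√τ, (δ + 1/√τ)√τ] with Lipschitz constant B√τ in the first variable, and Θ₁(η, τ) = 1 + w(τ) (a bounded function) for η ≥ (δ + 1/√τ)√τ, with δ ∈ (0,1/2]. Then |F(m√τ, τ)| ≤ C/(m³√τ) for a constant C depending only on δ, B, and sup|w|. -/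
/-!
Partial fractions give `n² / ((m² - n²)(n² + 1)) = (m² / (m² - n²) - 1 / (n² + 1)) / (m² + 1)`,
which has an explicit primitive. Since `PV ∫₀^∞ dn / (m² - n²) = 0` (the logarithmic
singularities at `n = m` cancel symmetrically), the principal value of the kernel alone is
`-π / (2 (m² + 1))`. Writing `Θ = a + (Θ - a)` with `a = 1 + w(τ)`, where `Θ - a` vanishes beyond
`a₁ = δ + 1/√τ ≤ 3/2`, the principal value of the integrand is
`∫₀^{a₁} k (Θ - a) - a π / (2 (m² + 1))`. On `[0, a₁]` the kernel `k` is `O(1/m²)`, and `Θ - a` is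
bounded on `[0, δ]` and of size `O(√τ)` on the transition layer of width `1/√τ`, so both terms
are `O(1/m²)`.
-/

open MeasureTheory Real Filter Set Topology

noncomputable def pvKernel (m n : ℝ) : ℝ := n ^ 2 / ((m ^ 2 - n ^ 2) * (n ^ 2 + 1))

/-- `Real.log` is `log |·|`, so this is a primitive of `pvKernel m` on each side of `±m`. -/
noncomputable def pvKernelPrimitive (m n : ℝ) : ℝ :=
  (m / 2 * (log (m + n) - log (m - n)) - arctan n) / (m ^ 2 + 1)

/-- The truncation at `p = (ε, R)` of `PV ∫₀^∞ f` around the singularity `m`. -/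
noncomputable def pvPartialIntegral (f : ℝ → ℝ) (m : ℝ) (p : ℝ × ℝ) : ℝ :=
  (∫ n in (0 : ℝ)..m - p.1, f n) + ∫ n in m + p.1..p.2, f n

lemma Ico_subset_setOf_sq_ne (m : ℝ) : Ico 0 m ⊆ {n : ℝ | n ^ 2 ≠ m ^ 2} :=
  fun _ hn => (pow_lt_pow_left₀ hn.2 hn.1 two_ne_zero).ne

lemma Ioi_subset_setOf_sq_ne {m : ℝ} (hm : 0 ≤ m) : Ioi m ⊆ {n : ℝ | n ^ 2 ≠ m ^ 2} :=
  fun _ hn => (pow_lt_pow_left₀ hn hm two_ne_zero).ne'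

lemma continuousOn_pvKernel (m : ℝ) : ContinuousOn (pvKernel m) {n | n ^ 2 ≠ m ^ 2} :=
  ContinuousOn.div (by fun_prop) (by fun_prop) fun _ hn =>
    mul_ne_zero (sub_ne_zero.2 (Ne.symm hn)) (by positivity)

lemma hasDerivAt_pvKernelPrimitive {m n : ℝ} (hn : n ^ 2 ≠ m ^ 2) :
    HasDerivAt (pvKernelPrimitive m) (pvKernel m n) n := by
  have hsub : m ^ 2 - n ^ 2 ≠ 0 := sub_ne_zero.2 (Ne.symm hn)
  have hplus : m + n ≠ 0 := fun h => hsub (by rw [show n = -m by linarith]; ring)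
  have hminus : m - n ≠ 0 := fun h => hsub (by rw [show n = m by linarith]; ring)
  have := (((((hasDerivAt_id n).const_add m).log hplus).sub
    (((hasDerivAt_id n).const_sub m).log hminus)).const_mul (m / 2)).sub
    (hasDerivAt_arctan n) |>.div_const (m ^ 2 + 1)
  refine (this : HasDerivAt (pvKernelPrimitive m) _ n).congr_deriv ?_
  simp only [pvKernel, id]
  field_simp
  ring

lemma integral_pvKernel {m u v : ℝ} (h : uIcc u v ⊆ {n | n ^ 2 ≠ m ^ 2}) :
    ∫ n in u..v, pvKernel m n = pvKernelPrimitive m v - pvKernelPrimitive m u :=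
  intervalIntegral.integral_eq_sub_of_hasDerivAt (fun _ hn => hasDerivAt_pvKernelPrimitive (h hn))
    ((continuousOn_pvKernel m).mono h).intervalIntegrable

lemma eventually_fst_mem_Ioo_and_le_snd {c : ℝ} (hc : 0 < c) (R₀ : ℝ) :
    ∀ᶠ p : ℝ × ℝ in 𝓝[>] 0 ×ˢ atTop, p.1 ∈ Ioo 0 c ∧ R₀ ≤ p.2 :=
  Eventually.prod_mk (Ioo_mem_nhdsGT hc) (eventually_ge_atTop R₀)

lemma pvPartialIntegral_pvKernel {m ε R : ℝ} (hε : ε ∈ Ioo 0 m) (hR : m + ε ≤ R) :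
    pvPartialIntegral (pvKernel m) m (ε, R) =
      pvKernelPrimitive m (m - ε) - pvKernelPrimitive m (m + ε) + pvKernelPrimitive m R := by
  have hm : 0 ≤ m := hε.1.le.trans hε.2.le
  rw [pvPartialIntegral, integral_pvKernel, integral_pvKernel]
  · rw [show pvKernelPrimitive m 0 = 0 by simp [pvKernelPrimitive]]
    ring
  · rw [uIcc_of_le hR]
    exact (Icc_subset_Ioi_iff hR).2 (by linarith [hε.1]) |>.trans (Ioi_subset_setOf_sq_ne hm)
  · rw [uIcc_of_le (by linarith [hε.2])]
    exact (Icc_subset_Ico_right (by linarith [hε.1])).trans (Ico_subset_setOf_sq_ne m)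

lemma pvKernelPrimitive_sub_sub_add (m ε : ℝ) :
    pvKernelPrimitive m (m - ε) - pvKernelPrimitive m (m + ε) =
      (m / 2 * (log (2 * m - ε) - log (2 * m + ε)) - arctan (m - ε) + arctan (m + ε)) /
        (m ^ 2 + 1) := by
  simp only [pvKernelPrimitive]
  -- the principal-value cancellation: `log (-ε) = log ε`
  rw [show m - (m + ε) = -ε by ring, log_neg_eq_log]
  ring_nf

lemma tendsto_pvKernelPrimitive_sub_sub_add {m : ℝ} (hm : 0 < m) :
    Tendsto (fun ε => pvKernelPrimitive m (m - ε) - pvKernelPrimitive m (m + ε)) (𝓝 0) (𝓝 0) := by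
  simp_rw [pvKernelPrimitive_sub_sub_add]
  convert ContinuousAt.tendsto ?_ using 2
  · simp
  · fun_prop (disch := simp; positivity)

lemma tendsto_pvKernelPrimitive_atTop (m : ℝ) :
    Tendsto (pvKernelPrimitive m) atTop (𝓝 (-(π / 2) / (m ^ 2 + 1))) := by
  have hlog : Tendsto (fun R => log (m + R) - log (m - R)) atTop (𝓝 0) := by
    have := (tendsto_log_comp_add_sub_log m).sub (tendsto_log_comp_add_sub_log (-m))
    rw [sub_zero] at this
    refine this.congr fun R => ?_
    rw [← log_neg_eq_log (m - R)]
    ring_nf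
  have := ((hlog.const_mul (m / 2)).sub
    (tendsto_arctan_atTop.mono_right nhdsWithin_le_nhds)).div_const (m ^ 2 + 1)
  rwa [mul_zero, zero_sub] at this

lemma tendsto_pvPartialIntegral_pvKernel {m : ℝ} (hm : 0 < m) :
    Tendsto (pvPartialIntegral (pvKernel m) m) (𝓝[>] 0 ×ˢ atTop)
      (𝓝 (-(π / 2) / (m ^ 2 + 1))) := by
  have hlim := (((tendsto_pvKernelPrimitive_sub_sub_add hm).mono_left
    (nhdsWithin_le_nhds (s := Ioi 0))).comp tendsto_fst).add
    ((tendsto_pvKernelPrimitive_atTop m).comp tendsto_snd)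
  rw [zero_add] at hlim
  refine hlim.congr' ?_
  filter_upwards [eventually_fst_mem_Ioo_and_le_snd hm (2 * m)] with p hp
  exact (pvPartialIntegral_pvKernel hp.1 (by linarith [hp.1.2, hp.2])).symm

lemma pvPartialIntegral_mul_eventuallyEq {h θ : ℝ → ℝ} {a b m : ℝ} (hb : 0 ≤ b) (hbm : b < m)
    (hh : ContinuousOn h (Ico 0 m)) (hθ : ContinuousOn θ (Ico 0 m))
    (hθa : ∀ n, b ≤ n → θ n = a) :
    pvPartialIntegral (fun n => h n * θ n) m =ᶠ[𝓝[>] 0 ×ˢ atTop]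
      fun p => (∫ n in (0 : ℝ)..b, h n * (θ n - a)) + a * pvPartialIntegral h m p := by
  have hint : ∀ {g : ℝ → ℝ}, ContinuousOn g (Ico 0 m) → ∀ {u v : ℝ}, u ∈ Ico 0 m →
      v ∈ Ico 0 m → IntervalIntegrable g volume u v := fun hg _ _ hu hv =>
    (hg.mono (ordConnected_Ico.uIcc_subset hu hv)).intervalIntegrable
  filter_upwards [eventually_fst_mem_Ioo_and_le_snd (sub_pos.2 hbm) b] with ⟨ε, R⟩ ⟨hε, hR⟩
  have h0 : (0 : ℝ) ∈ Ico 0 m := ⟨le_rfl, hb.trans_lt hbm⟩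
  have hb' : b ∈ Ico 0 m := ⟨hb, hbm⟩
  have hx : m - ε ∈ Ico 0 m := ⟨by linarith [hε.2], by linarith [hε.1]⟩
  have hbx : ∫ n in b..m - ε, h n * θ n = a * ∫ n in b..m - ε, h n := by
    rw [← intervalIntegral.integral_const_mul]
    refine intervalIntegral.integral_congr fun n hn => ?_
    rw [uIcc_of_le (by linarith [hε.2])] at hn
    simp only [hθa n hn.1, mul_comm]
  have htail : ∫ n in m + ε..R, h n * θ n = a * ∫ n in m + ε..R, h n := by
    rw [← intervalIntegral.integral_const_mul]
    refine intervalIntegral.integral_congr fun n hn => ?_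
    simp only [hθa n ((le_min (by linarith [hε.1]) hR).trans hn.1), mul_comm]
  have hhθ : ContinuousOn (fun n => h n * θ n) (Ico 0 m) := hh.mul hθ
  have hsplit := intervalIntegral.integral_add_adjacent_intervals
    (hint hh h0 hb') (hint hh hb' hx)
  have hsplitθ := intervalIntegral.integral_add_adjacent_intervals
    (hint hhθ h0 hb') (hint hhθ hb' hx)
  have hhead : ∫ n in (0 : ℝ)..b, h n * (θ n - a) =
      (∫ n in (0 : ℝ)..b, h n * θ n) - a * ∫ n in (0 : ℝ)..b, h n := by
    simp_rw [mul_sub]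
    rw [intervalIntegral.integral_sub (hint hhθ h0 hb') ((hint hh h0 hb').mul_const a),
      intervalIntegral.integral_mul_const, mul_comm]
  simp only [pvPartialIntegral]
  linear_combination -hhead - hsplitθ + a * hsplit + hbx + htail

lemma abs_pvKernel_le {m c n : ℝ} (hm : 0 < m) (hc : c < 1) (hn : |n| ≤ c * m) :
    |pvKernel m n| ≤ 1 / ((1 - c ^ 2) * m ^ 2) := by
  have hc0 : 0 ≤ c := nonneg_of_mul_nonneg_left ((abs_nonneg n).trans hn) hm
  have hn2 : n ^ 2 ≤ c ^ 2 * m ^ 2 := by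
    rw [← sq_abs, ← mul_pow]
    exact pow_le_pow_left₀ (abs_nonneg n) hn 2
  have hgap : (1 - c ^ 2) * m ^ 2 ≤ m ^ 2 - n ^ 2 := by linarith
  have hgap0 : 0 < (1 - c ^ 2) * m ^ 2 := by
    have : c ^ 2 < 1 := by nlinarith
    positivity
  have hden : 0 < m ^ 2 - n ^ 2 := hgap0.trans_le hgap
  rw [pvKernel, abs_of_nonneg (by positivity)]
  calc n ^ 2 / ((m ^ 2 - n ^ 2) * (n ^ 2 + 1)) ≤ 1 / (m ^ 2 - n ^ 2) := by
        rw [div_le_div_iff₀ (by positivity) hden]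
        nlinarith
    _ ≤ 1 / ((1 - c ^ 2) * m ^ 2) := one_div_le_one_div_of_le hgap0 hgap

lemma continuous_of_abs_sub_le_mul {f : ℝ → ℝ} {L : ℝ} (h : ∀ x y, |f x - f y| ≤ L * |x - y|) :
    Continuous f :=
  (LipschitzWith.of_dist_le' fun x y => by simpa only [Real.dist_eq] using h x y).continuous

lemma abs_integral_pvKernel_mul_sub_le {θ : ℝ → ℝ} {m c δ ℓ L t a : ℝ} (hm : 0 < m) (hc : c < 1)
    (hδ : 0 ≤ δ) (hℓ : 0 ≤ ℓ) (hδℓ : δ + ℓ ≤ c * m) (hL : 0 ≤ L)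
    (hlip : ∀ x y, |θ x - θ y| ≤ L * |x - y|) (hlow : ∀ n ≤ δ, θ n = t) :
    |∫ n in (0 : ℝ)..δ + ℓ, pvKernel m n * (θ n - a)| ≤
      ((δ + ℓ) * |t - a| + L * ℓ ^ 2) / ((1 - c ^ 2) * m ^ 2) := by
  set κ := 1 / ((1 - c ^ 2) * m ^ 2)
  have hcm : c * m < m := by nlinarith [nonneg_of_mul_nonneg_left (by linarith : 0 ≤ c * m) hm]
  have hk : ∀ n ∈ Icc 0 (δ + ℓ), |pvKernel m n| ≤ κ := fun n hn =>
    abs_pvKernel_le hm hc (by rw [abs_of_nonneg hn.1]; linarith [hn.2])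
  have hκ : 0 ≤ κ := (abs_nonneg _).trans (hk 0 ⟨le_rfl, by linarith⟩)
  have hint : ∀ {u v : ℝ}, u ∈ Icc 0 (δ + ℓ) → v ∈ Icc 0 (δ + ℓ) →
      IntervalIntegrable (fun n => pvKernel m n * (θ n - a)) volume u v := fun hu hv =>
    (((continuousOn_pvKernel m).mono ((ordConnected_Icc.uIcc_subset hu hv).trans
      ((Icc_subset_Ico_right (by linarith)).trans (Ico_subset_setOf_sq_ne m)))).mul
      ((continuous_of_abs_sub_le_mul hlip).sub continuous_const).continuousOn).intervalIntegrable
  have hhead : ‖∫ n in (0 : ℝ)..δ, pvKernel m n * (θ n - a)‖ ≤ κ * |t - a| * |δ - 0| := by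
    refine intervalIntegral.norm_integral_le_of_norm_le_const fun n hn => ?_
    rw [uIoc_of_le hδ] at hn
    rw [Real.norm_eq_abs, abs_mul, hlow n hn.2]
    exact mul_le_mul_of_nonneg_right (hk n ⟨hn.1.le, by linarith [hn.2]⟩) (abs_nonneg _)
  have htrans : ‖∫ n in δ..δ + ℓ, pvKernel m n * (θ n - a)‖ ≤
      κ * (L * ℓ + |t - a|) * |δ + ℓ - δ| := by
    refine intervalIntegral.norm_integral_le_of_norm_le_const fun n hn => ?_
    rw [uIoc_of_le (by linarith)] at hn
    have hθn : |θ n - a| ≤ L * ℓ + |t - a| := by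
      calc |θ n - a| = |(θ n - θ δ) + (t - a)| := by rw [hlow δ le_rfl]; ring_nf
        _ ≤ L * |n - δ| + |t - a| := (abs_add_le _ _).trans (by gcongr; exact hlip n δ)
        _ ≤ L * ℓ + |t - a| := by
          gcongr
          rw [abs_of_nonneg (by linarith [hn.1])]
          linarith [hn.2]
    rw [Real.norm_eq_abs, abs_mul]
    exact mul_le_mul (hk n ⟨by linarith [hn.1], hn.2⟩) hθn (abs_nonneg _) hκ
  rw [← intervalIntegral.integral_add_adjacent_intervals (hint ⟨le_rfl, by linarith⟩
    ⟨hδ, by linarith⟩) (hint ⟨hδ, by linarith⟩ ⟨by linarith, le_rfl⟩)]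
  rw [sub_zero, abs_of_nonneg hδ, Real.norm_eq_abs] at hhead
  rw [add_sub_cancel_left, abs_of_nonneg hℓ, Real.norm_eq_abs] at htrans
  calc _ ≤ _ := abs_add_le _ _
    _ ≤ κ * |t - a| * δ + κ * (L * ℓ + |t - a|) * ℓ := add_le_add hhead htrans
    _ = _ := by ring

lemma tendsto_pvPartialIntegral_pvKernel_mul {θ : ℝ → ℝ} {a b m : ℝ} (hb : 0 ≤ b) (hbm : b < m)
    (hθ : Continuous θ) (hθa : ∀ n, b ≤ n → θ n = a) :
    Tendsto (pvPartialIntegral (fun n => pvKernel m n * θ n) m) (𝓝[>] 0 ×ˢ atTop)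
      (𝓝 ((∫ n in (0 : ℝ)..b, pvKernel m n * (θ n - a)) + a * (-(π / 2) / (m ^ 2 + 1)))) :=
  (((tendsto_pvPartialIntegral_pvKernel (hb.trans_lt hbm)).const_mul a).const_add _).congr'
    (pvPartialIntegral_mul_eventuallyEq hb hbm
      ((continuousOn_pvKernel m).mono (Ico_subset_setOf_sq_ne m)) hθ.continuousOn hθa).symm

lemma abs_integral_pvKernel_mul_sub_add_le {θ : ℝ → ℝ} {m δ ℓ L t a K : ℝ} (hm : 2 ≤ m)
    (hδ : 0 ≤ δ) (hℓ : 0 ≤ ℓ) (hδℓ : δ + ℓ ≤ 3 / 2) (hL : 0 ≤ L)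
    (hlip : ∀ x y, |θ x - θ y| ≤ L * |x - y|) (hlow : ∀ n ≤ δ, θ n = t)
    (ha : |a| ≤ K) (hta : |t - a| ≤ K) :
    |(∫ n in (0 : ℝ)..δ + ℓ, pvKernel m n * (θ n - a)) + a * (-(π / 2) / (m ^ 2 + 1))| ≤
      (3 * (L * ℓ ^ 2) + 6 * K) / m ^ 2 := by
  have hm0 : 0 < m := by linarith
  have hK : 0 ≤ K := (abs_nonneg a).trans ha
  have hhead : |∫ n in (0 : ℝ)..δ + ℓ, pvKernel m n * (θ n - a)| ≤
      (3 / 2 * K + L * ℓ ^ 2) / ((1 - (3 / 4) ^ 2) * m ^ 2) := by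
    refine (abs_integral_pvKernel_mul_sub_le hm0 (by norm_num) hδ hℓ (by linarith) hL hlip
      hlow).trans (div_le_div_of_nonneg_right ?_ (by positivity))
    gcongr
  have htail : |a * (-(π / 2) / (m ^ 2 + 1))| ≤ K * (2 / m ^ 2) := by
    rw [abs_mul, abs_div, abs_neg, abs_of_pos (by positivity : 0 < π / 2),
      abs_of_pos (by positivity : (0 : ℝ) < m ^ 2 + 1)]
    gcongr
    · linarith [pi_le_four]
    · linarith
  calc _ ≤ _ := abs_add_le _ _
    _ ≤ _ := add_le_add hhead htail
    _ = (16 / 7 * (L * ℓ ^ 2) + 38 / 7 * K) / m ^ 2 := by ring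
    _ ≤ _ := by gcongr <;> linarith [mul_nonneg hL (sq_nonneg ℓ)]

/-- Large-frequency bound for `F(m√τ, τ) = (1/(m√τ)) PV ∫₀^∞
n²/((m²−n²)(n²+1)) Θ₁(n√τ, τ) dn` where `Θ₁(·, τ)` equals `2` below `δ√τ`,
equals `1 + w(τ)` above `δ√τ + 1`, and is `B√τ`-Lipschitz in its first
variable.  The principal value exists and `|F(m√τ, τ)| ≤ C/(m³√τ)` with `C`
depending only on `δ`, `B` and `sup |w|`. -/
theorem stmt16 (δ B W : ℝ) (hδ0 : 0 < δ) (hδ : δ ≤ 1/2) (hB : 0 < B) (hW : 0 ≤ W) :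
    ∃ C > 0, ∀ τ : ℝ, 1 ≤ τ → ∀ w : ℝ → ℝ, (∀ t, |w t| ≤ W) →
      ∀ Θ₁ : ℝ → ℝ → ℝ,
        Measurable (fun η => Θ₁ η τ) →
        (∀ η, η ≤ δ * Real.sqrt τ → Θ₁ η τ = 2) →
        (∀ η, δ * Real.sqrt τ + 1 ≤ η → Θ₁ η τ = 1 + w τ) →
        (∀ η₁ η₂, |Θ₁ η₁ τ - Θ₁ η₂ τ| ≤ B * Real.sqrt τ * |η₁ - η₂|) →
        ∀ m : ℝ, 2 ≤ m →
          ∃ I : ℝ,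
            Filter.Tendsto
              (fun p : ℝ × ℝ =>
                (∫ n in (0:ℝ)..(m - p.1),
                  n ^ 2 / ((m ^ 2 - n ^ 2) * (n ^ 2 + 1)) *
                    Θ₁ (n * Real.sqrt τ) τ) +
                ∫ n in (m + p.1)..p.2,
                  n ^ 2 / ((m ^ 2 - n ^ 2) * (n ^ 2 + 1)) *
                    Θ₁ (n * Real.sqrt τ) τ)
              ((nhdsWithin 0 (Set.Ioi 0)) ×ˢ Filter.atTop) (nhds I) ∧
            |(1 / (m * Real.sqrt τ)) * I| ≤ C / (m ^ 3 * Real.sqrt τ) := by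
  refine ⟨3 * B + 6 * (1 + W), by positivity, fun τ hτ w hw Θ₁ _ hlow hhigh hlip m hm => ?_⟩
  set s := √τ
  have hs : 1 ≤ s := one_le_sqrt.2 hτ
  have hs0 : 0 < s := by linarith
  have hinv : 1 / s ≤ 1 := (div_le_one hs0).2 hs
  set θ : ℝ → ℝ := fun n => Θ₁ (n * s) τ
  have hθlip : ∀ x y, |θ x - θ y| ≤ B * s ^ 2 * |x - y| := fun x y => by
    calc |θ x - θ y| ≤ B * s * |x * s - y * s| := hlip _ _
      _ = B * s ^ 2 * |x - y| := by rw [← sub_mul, abs_mul, abs_of_pos hs0]; ring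
  have hθhigh : ∀ n, δ + 1 / s ≤ n → θ n = 1 + w τ := fun n hn => hhigh _ <| by
    calc δ * s + 1 = (δ + 1 / s) * s := by field_simp
      _ ≤ n * s := by gcongr
  refine ⟨_, tendsto_pvPartialIntegral_pvKernel_mul (by positivity) (by linarith)
    (continuous_of_abs_sub_le_mul hθlip) hθhigh, ?_⟩
  have hw' := abs_le.1 (hw τ)
  have hI := abs_integral_pvKernel_mul_sub_add_le (ℓ := 1 / s) (a := 1 + w τ) (K := 1 + W) hm
    hδ0.le (by positivity) (by linarith) (by positivity) hθlip (fun n hn => hlow _ (by gcongr))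
    (abs_le.2 ⟨by linarith, by linarith⟩) (abs_le.2 ⟨by linarith, by linarith⟩)
  rw [show B * s ^ 2 * (1 / s) ^ 2 = B by field_simp] at hI
  rw [abs_mul, abs_of_pos (by positivity), show (3 * B + 6 * (1 + W)) / (m ^ 3 * s) =
    1 / (m * s) * ((3 * B + 6 * (1 + W)) / m ^ 2) by field_simp]
  gcongr
end
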